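/- arXiv:0806.3824 — 9 statements merged into one kernel-verified Lean document; each statement's English description precedes it below -/
import Mathlib

section
/- The Lie algebra su(m) ⊂ so(2m) (viewed as real skew-symmetric matrices via the standard identification ℂ^m ≅ ℝ^{2m}) contains no nonzero element of real rank two. -/
/-!
The real rank of a complex-linear map is twice its complex rank, so a real rank two element `A`
of `su(m)` has complex rank one. A rank-one matrix `w cᵀ` satisfies `A * A = (c ⬝ᵥ w) • A =
tr A • A`, hence `A * A = 0` since `A` is traceless. Being skew-Hermitian, `Aᴴ * A = -(A * A) = 0`,
which forces `A = 0`.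
-/

open scoped Matrix ComplexOrder
open Module

theorem LinearMap.finrank_range_restrictScalars {K L V W : Type*} [Field K] [Field L]
    [Algebra K L] [AddCommGroup V] [Module L V] [Module K V] [IsScalarTower K L V]
    [AddCommGroup W] [Module L W] [Module K W] [IsScalarTower K L W] (f : V →ₗ[L] W) :
    finrank K (range (f.restrictScalars K)) = finrank K L * finrank L (range f) :=
  (finrank_mul_finrank K L (range f)).symm

namespace Matrix

variable {n : Type*} [Fintype n]

theorem exists_eq_vecMulVec_of_rank_le_one {K : Type*} [Field K] {A : Matrix n n K}
    (hA : A.rank ≤ 1) : ∃ w c : n → K, A = vecMulVec w c := by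
  classical
  rw [rank, finrank_le_one_iff] at hA
  obtain ⟨⟨w, _⟩, hw⟩ := hA
  have hcol : ∀ j, ∃ c : K, c • w = Aᵀ j := by
    intro j
    obtain ⟨c, hc⟩ := hw ⟨Aᵀ j, Pi.single j 1, A.mulVec_single_one j⟩
    exact ⟨c, congrArg Subtype.val hc⟩
  choose c hc using hcol
  refine ⟨w, c, Matrix.ext fun i j => ?_⟩
  simpa [vecMulVec_apply, mul_comm] using (congrFun (hc j) i).symm

theorem mul_self_eq_trace_smul_of_rank_le_one {K : Type*} [Field K] {A : Matrix n n K}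
    (hA : A.rank ≤ 1) : A * A = A.trace • A := by
  obtain ⟨w, c, rfl⟩ := exists_eq_vecMulVec_of_rank_le_one hA
  rw [vecMulVec_mul_vecMulVec, trace_vecMulVec, dotProduct_comm, vecMulVec_smul]

theorem eq_zero_of_conjTranspose_eq_neg_of_mul_self_eq_zero {R : Type*} [PartialOrder R]
    [NonUnitalRing R] [StarRing R] [StarOrderedRing R] [NoZeroDivisors R] {A : Matrix n n R}
    (hskew : Aᴴ = -A) (hsq : A * A = 0) : A = 0 := by
  rw [← conjTranspose_mul_self_eq_zero, hskew, neg_mul, hsq, neg_zero]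

end Matrix

/-- The Lie algebra `su(m) ⊂ so(2m)` contains no nonzero element of
real rank two: if `A` is a traceless skew-Hermitian complex `m × m` matrix, viewed (via
`ℂ^m ≅ ℝ^{2m}`) as a real-linear endomorphism of `ℂ^m`, and this endomorphism has real
rank two, then `A = 0`.  Equivalently, every nonzero element of `su(m)` has real rank
different from two. -/
theorem stmt1 (m : ℕ) (A : Matrix (Fin m) (Fin m) ℂ)
    (hskew : Aᴴ = -A) (htrace : A.trace = 0) (hA : A ≠ 0) :
    Module.finrank ℝ
      (LinearMap.range ((Matrix.toLin' A).restrictScalars ℝ)) ≠ 2 := by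
  intro hreal
  rw [LinearMap.finrank_range_restrictScalars, Complex.finrank_real_complex] at hreal
  have hrank : A.rank ≤ 1 := by
    rw [Matrix.rank, ← Matrix.toLin'_apply']
    omega
  refine hA (Matrix.eq_zero_of_conjTranspose_eq_neg_of_mul_self_eq_zero hskew ?_)
  rw [Matrix.mul_self_eq_trace_smul_of_rank_le_one hrank, htrace, zero_smul]
end

section
/- Every element of the Lie algebra g₂ ⊂ so(7), viewed as a skew-symmetric 7×7 real matrix, has real rank at least 4 (in particular g₂ contains no matrix of real rank two). -/
open scoped Quaternion

noncomputable section

/-- The octonions, via the Cayley–Dickson construction `𝕆 = ℍ ⊕ ℍ`. -/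
abbrev Oct : Type := ℍ[ℝ] × ℍ[ℝ]

/-- Octonion multiplication (Cayley–Dickson). -/
def omul (x y : Oct) : Oct :=
  (x.1 * y.1 - star y.2 * x.2, y.2 * x.1 + x.2 * star y.1)

/-- Left multiplication `L_q` as a real-linear endomorphism of `𝕆`. -/
def Lo (q : Oct) : Oct →ₗ[ℝ] Oct where
  toFun y := omul q y
  map_add' y z := by
    simp only [omul, Prod.fst_add, Prod.snd_add, star_add, mul_add, add_mul,
      Prod.mk_add_mk, Prod.mk.injEq]
    constructor <;> abel
  map_smul' c y := by
    simp only [omul, Prod.smul_fst, Prod.smul_snd, Quaternion.star_smul,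
      mul_smul_comm, smul_mul_assoc, RingHom.id_apply, Prod.smul_mk, smul_sub,
      smul_add, Prod.mk.injEq]

/-- Right multiplication `R_q` as a real-linear endomorphism of `𝕆`. -/
def Ro (q : Oct) : Oct →ₗ[ℝ] Oct where
  toFun y := omul y q
  map_add' y z := by
    simp only [omul, Prod.fst_add, Prod.snd_add, star_add, mul_add, add_mul,
      Prod.mk_add_mk, Prod.mk.injEq]
    constructor <;> abel
  map_smul' c y := by
    simp only [omul, Prod.smul_fst, Prod.smul_snd, Quaternion.star_smul,
      mul_smul_comm, smul_mul_assoc, RingHom.id_apply, Prod.smul_mk, smul_sub,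
      smul_add, Prod.mk.injEq]

/-- The imaginary octonions. -/
def ImO : Set Oct := {x | x.1.re = 0}

/-- A derivation of the octonions (an element of `g₂ ⊂ so(8)`). -/
def IsOctDer (D : Oct →ₗ[ℝ] Oct) : Prop :=
  ∀ x y : Oct, D (omul x y) = omul (D x) y + omul x (D y)

/-- The standard inner product on `𝕆 = ℍ ⊕ ℍ`. -/
def innO (x y : Oct) : ℝ := inner ℝ x.1 y.1 + inner ℝ x.2 y.2

/-- Membership in `so(8) = so(𝕆)`: skew-symmetry with respect to `innO`. -/
def IsSkewO (A : Oct →ₗ[ℝ] Oct) : Prop :=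
  ∀ x y : Oct, innO (A x) y = - innO x (A y)

/-!
If `D y ≠ 0`, right multiplication by `D y` embeds `ker D` into `range D`: for `D a = 0` the
Leibniz rule gives `a · D y = D (a · y)`, and `𝕆` has no zero divisors since its norm is
multiplicative. So `dim ker D ≤ rank D`, and rank–nullity in dimension `8` forces
`rank D ≥ 4`.
-/

-- The Cayley–Dickson norm; multiplicativity is the eight-square identity.
def octNormSq (x : Oct) : ℝ := Quaternion.normSq x.1 + Quaternion.normSq x.2

theorem octNormSq_omul (x y : Oct) : octNormSq (omul x y) = octNormSq x * octNormSq y := by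
  obtain ⟨a, b⟩ := x
  obtain ⟨c, d⟩ := y
  simp only [octNormSq, omul, Quaternion.normSq_def', Quaternion.re_mul, Quaternion.imI_mul,
    Quaternion.imJ_mul, Quaternion.imK_mul, Quaternion.re_sub, Quaternion.imI_sub,
    Quaternion.imJ_sub, Quaternion.imK_sub, Quaternion.re_add, Quaternion.imI_add,
    Quaternion.imJ_add, Quaternion.imK_add, Quaternion.re_star, Quaternion.imI_star,
    Quaternion.imJ_star, Quaternion.imK_star]
  ring

theorem octNormSq_eq_zero {x : Oct} : octNormSq x = 0 ↔ x = 0 := by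
  rw [octNormSq, add_eq_zero_iff_of_nonneg Quaternion.normSq_nonneg Quaternion.normSq_nonneg,
    Quaternion.normSq_eq_zero, Quaternion.normSq_eq_zero, Prod.ext_iff, Prod.fst_zero,
    Prod.snd_zero]

theorem eq_zero_of_omul_eq_zero {x y : Oct} (h : omul x y = 0) (hy : y ≠ 0) : x = 0 := by
  have hN : octNormSq x * octNormSq y = 0 := by
    rw [← octNormSq_omul, h, octNormSq_eq_zero.2 rfl]
  exact octNormSq_eq_zero.1 ((mul_eq_zero.1 hN).resolve_right (mt octNormSq_eq_zero.1 hy))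

theorem Ro_injective {w : Oct} (hw : w ≠ 0) : Function.Injective (Ro w) :=
  (injective_iff_map_eq_zero (Ro w)).2 fun _ hx => eq_zero_of_omul_eq_zero hx hw

theorem IsOctDer.omul_apply_eq_apply_omul {D : Oct →ₗ[ℝ] Oct} (hD : IsOctDer D) {a : Oct}
    (ha : D a = 0) (y : Oct) : omul a (D y) = D (omul a y) := by
  rw [hD, ha]
  simp [omul]

theorem IsOctDer.finrank_ker_le_finrank_range {D : Oct →ₗ[ℝ] Oct} (hD : IsOctDer D)
    (hne : D ≠ 0) :
    Module.finrank ℝ (LinearMap.ker D) ≤ Module.finrank ℝ (LinearMap.range D) := by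
  obtain ⟨y, hy⟩ : ∃ y, D y ≠ 0 := by
    by_contra! h
    exact hne (LinearMap.ext h)
  have hmaps : ∀ a ∈ LinearMap.ker D, Ro (D y) a ∈ LinearMap.range D := fun a ha =>
    ⟨omul a y, (hD.omul_apply_eq_apply_omul (LinearMap.mem_ker.1 ha) y).symm⟩
  let f : LinearMap.ker D →ₗ[ℝ] LinearMap.range D :=
    ((Ro (D y)).comp (LinearMap.ker D).subtype).codRestrict _ fun a => hmaps a a.2
  refine LinearMap.finrank_le_finrank_of_injective (f := f) fun a b hab => ?_
  exact Subtype.ext (Ro_injective hy (congrArg Subtype.val hab))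

theorem finrank_Oct : Module.finrank ℝ Oct = 8 := by
  simp [Module.finrank_prod, Quaternion.finrank_eq_four]

/-- Every nonzero element of `g₂ ⊂ so(7)`, i.e. every nonzero
derivation `D` of the octonions (which automatically annihilates `1` and preserves
`Im 𝕆`, hence is determined by a skew-symmetric `7×7` matrix on `Im 𝕆`), has real rank
at least `4`; in particular `g₂` contains no matrix of real rank two. -/
theorem stmt2 (D : Oct →ₗ[ℝ] Oct) (hD : IsOctDer D) (hne : D ≠ 0) :
    4 ≤ Module.finrank ℝ (LinearMap.range D) := by
  have hle := hD.finrank_ker_le_finrank_range hne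
  have hsum := LinearMap.finrank_range_add_finrank_ker D
  rw [finrank_Oct] at hsum
  omega

end
end

section
/- Any nonzero element of the subalgebra t ⊕ sp(m) ⊂ so(4m), m ≥ 2, where t ⊂ sp(1) is at most one-dimensional acting by scalar right multiplication and sp(m) acts on ℍ^m, has real rank at least 4 as a real endomorphism of ℝ^{4m}. -/
/-!
Write `T = L_A + R_q` and `R_c` for right multiplication by `c ∈ ℍ`. Left multiplication by `A`
commutes with every `R_c`, and a nonzero map commuting with all `R_c` has a right
`ℍ`-submodule as image, hence real rank at least `4`. This settles `q = 0`. For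
`q ≠ 0` imaginary, `q² = -ν` with `ν = |q|² > 0`, so on `ker T`, where `A x = -x q`, we get
`A² x = -ν x`: the kernel of the right `ℍ`-linear map `P = A² + ν` contains `ker T`, so
`rank T ≥ rank P ≥ 4` unless `P = 0`. If `P = 0`, then `A` is invertible; conjugating by right
multiplication with a unit `c` anticommuting with `q` shows that `S = L_A - R_q` has the same
rank as `T`, and `T + S = 2 L_A` gives `4m ≤ 2 rank T`.
-/

open scoped Quaternion Matrix

noncomputable section

/-- The real-linear endomorphism of `ℍ^m ≅ ℝ^{4m}` given by an element `(q, A)` of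
`t ⊕ sp(m)`:  `A` (a quaternionic matrix) acts by left matrix multiplication and
`q ∈ Im ℍ ⊇ t` acts by right scalar multiplication. -/
def Tmap (m : ℕ) (A : Matrix (Fin m) (Fin m) ℍ[ℝ]) (q : ℍ[ℝ]) :
    (Fin m → ℍ[ℝ]) →ₗ[ℝ] (Fin m → ℍ[ℝ]) where
  toFun x := A.mulVec x + fun l => x l * q
  map_add' x y := by
    funext l
    simp only [Matrix.mulVec, dotProduct, Pi.add_apply, mul_add,
      Finset.sum_add_distrib, add_mul]
    abel
  map_smul' c x := by
    funext l
    simp only [Matrix.mulVec_smul, Pi.smul_apply, Pi.add_apply, RingHom.id_apply,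
      smul_mul_assoc, smul_add]

open MulOpposite Module LinearMap

namespace Quaternion

theorem mul_eq_neg_mul_of_re_eq_zero {a b : ℍ[ℝ]} (ha : a.re = 0) (hb : b.re = 0)
    (hab : a.imI * b.imI + a.imJ * b.imJ + a.imK * b.imK = 0) : a * b = -(b * a) := by
  ext <;> simp [re_mul, imI_mul, imJ_mul, imK_mul, ha, hb] <;> linarith

theorem exists_ne_zero_mul_eq_neg_mul {q : ℍ[ℝ]} (hq : q.re = 0) :
    ∃ c : ℍ[ℝ], c ≠ 0 ∧ c * q = -(q * c) := by
  by_cases h : q.imI = 0 ∧ q.imJ = 0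
  · refine ⟨⟨0, 1, 0, 0⟩, fun h0 => one_ne_zero (congrArg QuaternionAlgebra.imI h0), ?_⟩
    exact mul_eq_neg_mul_of_re_eq_zero rfl hq (by simp [h])
  · refine ⟨⟨0, q.imJ, -q.imI, 0⟩, fun h0 => h ⟨?_, ?_⟩, ?_⟩
    · simpa using congrArg QuaternionAlgebra.imJ h0
    · simpa using congrArg QuaternionAlgebra.imI h0
    · exact mul_eq_neg_mul_of_re_eq_zero rfl hq (by simp; ring)

end Quaternion

namespace LinearMap

variable {K V W W' : Type*} [DivisionRing K] [AddCommGroup V] [Module K V] [AddCommGroup W]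
  [Module K W] [AddCommGroup W'] [Module K W'] [FiniteDimensional K V]

theorem finrank_range_le_of_ker_le (f : V →ₗ[K] W) (g : V →ₗ[K] W') (h : ker f ≤ ker g) :
    finrank K (range g) ≤ finrank K (range f) := by
  have := Submodule.finrank_mono h
  have := f.finrank_range_add_finrank_ker
  have := g.finrank_range_add_finrank_ker
  omega

theorem finrank_range_add_le (f g : V →ₗ[K] W) :
    finrank K (range (f + g)) ≤ finrank K (range f) + finrank K (range g) :=
  calc finrank K (range (f + g)) ≤ finrank K ↥(range f ⊔ range g) :=
        Submodule.finrank_mono (range_add_le f g)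
    _ ≤ _ := Submodule.finrank_add_le_finrank_add_finrank _ _

end LinearMap

section RightQuaternionic

variable {ι : Type*} [Fintype ι]

theorem four_le_finrank_of_op_smul_mem (W : Submodule ℝ (ι → ℍ[ℝ]))
    (hW : ∀ (c : ℍ[ℝ]), ∀ x ∈ W, op c • x ∈ W) (hne : W ≠ ⊥) : 4 ≤ finrank ℝ W := by
  obtain ⟨y, hyW, hy⟩ := W.ne_bot_iff.mp hne
  obtain ⟨l, hl⟩ := Function.ne_iff.mp hy
  let g : ℍ[ℝ] →ₗ[ℝ] (ι → ℍ[ℝ]) := LinearMap.pi fun k => LinearMap.mulLeft ℝ (y k)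
  have hg : Function.Injective g := by
    refine (injective_iff_map_eq_zero g).mpr fun c hc => ?_
    exact (mul_eq_zero.mp (congrFun hc l)).resolve_left hl
  have hgW : range g ≤ W := by
    rintro _ ⟨c, rfl⟩
    exact hW c y hyW
  calc 4 = finrank ℝ (range g) := by rw [finrank_range_of_inj hg, Quaternion.finrank_eq_four]
    _ ≤ finrank ℝ W := Submodule.finrank_mono hgW

theorem four_le_finrank_range_of_map_op_smul (f : (ι → ℍ[ℝ]) →ₗ[ℝ] (ι → ℍ[ℝ]))
    (hf : ∀ (c : ℍ[ℝ]) x, f (op c • x) = op c • f x) (hne : f ≠ 0) :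
    4 ≤ finrank ℝ (range f) := by
  refine four_le_finrank_of_op_smul_mem _ ?_ (mt range_eq_bot.mp hne)
  rintro c _ ⟨x, rfl⟩
  exact ⟨op c • x, hf c x⟩

theorem finrank_pi_quaternion : finrank ℝ (ι → ℍ[ℝ]) = 4 * Fintype.card ι := by
  simp [Module.finrank_pi_fintype, Quaternion.finrank_eq_four, mul_comm]

end RightQuaternionic

section Tmap

variable {m : ℕ} (A : Matrix (Fin m) (Fin m) ℍ[ℝ])

theorem Tmap_apply (q : ℍ[ℝ]) (x : Fin m → ℍ[ℝ]) : Tmap m A q x = A *ᵥ x + op q • x := rfl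

theorem Tmap_op_smul {c q q' : ℍ[ℝ]} (h : c * q = q' * c) (x : Fin m → ℍ[ℝ]) :
    Tmap m A q (op c • x) = op c • Tmap m A q' x := by
  simp only [Tmap_apply, Matrix.mulVec_smul, smul_add, smul_smul, ← op_mul, h]

theorem Tmap_add_Tmap_neg (q : ℍ[ℝ]) (x : Fin m → ℍ[ℝ]) :
    Tmap m A q x + Tmap m A (-q) x = A *ᵥ x + A *ᵥ x := by
  rw [Tmap_apply, Tmap_apply, op_neg, neg_smul]
  abel

theorem ker_Tmap_le_ker_Tmap_mul_self {q : ℍ[ℝ]} (hq : q.re = 0) :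
    ker (Tmap m A q) ≤ ker (Tmap m (A * A) ((Quaternion.normSq q : ℝ) : ℍ[ℝ])) := by
  intro x hx
  have hAx : A *ᵥ x = -(op q • x) := eq_neg_of_add_eq_zero_left hx
  have hqq : q * q = -((Quaternion.normSq q : ℝ) : ℍ[ℝ]) := by
    rw [← sq]; exact Quaternion.sq_eq_neg_normSq.mpr hq
  rw [mem_ker, Tmap_apply, ← Matrix.mulVec_mulVec, hAx, Matrix.mulVec_neg, Matrix.mulVec_smul,
    hAx, smul_neg, neg_neg, smul_smul, ← op_mul, hqq, op_neg, neg_smul, neg_add_cancel]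

theorem eq_zero_of_mulVec_eq_zero_of_Tmap_mul_self_eq_zero {r : ℝ} (hr : r ≠ 0)
    (h : Tmap m (A * A) (r : ℍ[ℝ]) = 0) {x : Fin m → ℍ[ℝ]} (hx : A *ᵥ x = 0) : x = 0 := by
  have hPx : Tmap m (A * A) (r : ℍ[ℝ]) x = 0 := by rw [h, LinearMap.zero_apply]
  rw [Tmap_apply, ← Matrix.mulVec_mulVec, hx, Matrix.mulVec_zero, zero_add] at hPx
  have hrx : r • x = 0 := by
    funext l
    simpa [Quaternion.mul_coe_eq_smul] using congrFun hPx l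
  exact (smul_eq_zero.mp hrx).resolve_left hr

theorem Tmap_add_Tmap_neg_injective (q : ℍ[ℝ]) (hA : ∀ x, A *ᵥ x = 0 → x = 0) :
    Function.Injective (Tmap m A q + Tmap m A (-q)) := by
  refine (injective_iff_map_eq_zero _).mpr fun x hx => hA x ?_
  rw [LinearMap.add_apply, Tmap_add_Tmap_neg, ← two_smul ℝ] at hx
  exact (smul_eq_zero.mp hx).resolve_left two_ne_zero

theorem two_mul_le_finrank_range_Tmap {q : ℍ[ℝ]} (hq : q.re = 0)
    (hA : ∀ x, A *ᵥ x = 0 → x = 0) : 2 * m ≤ finrank ℝ (range (Tmap m A q)) := by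
  obtain ⟨c, hc, hcq⟩ := Quaternion.exists_ne_zero_mul_eq_neg_mul hq
  let R : (Fin m → ℍ[ℝ]) →ₗ[ℝ] (Fin m → ℍ[ℝ]) := DistribSMul.toLinearMap ℝ _ (op c)
  have hR : range R = ⊤ := range_eq_top.mpr fun y =>
    ⟨op c⁻¹ • y, by simp [R, smul_smul, mul_inv_cancel₀ (op_ne_zero_iff c |>.mpr hc)]⟩
  have hS : finrank ℝ (range (Tmap m A (-q))) ≤ finrank ℝ (range (Tmap m A q)) := by
    rw [← range_comp_of_range_eq_top _ hR]
    refine finrank_range_le_of_ker_le _ _ fun x hx => ?_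
    have hc' : c * -q = q * c := by rw [mul_neg, hcq, neg_neg]
    simp [R, Tmap_op_smul A hc', mem_ker.mp hx]
  have hTS := finrank_range_add_le (Tmap m A q) (Tmap m A (-q))
  rw [finrank_range_of_inj (Tmap_add_Tmap_neg_injective A q hA), finrank_pi_quaternion,
    Fintype.card_fin] at hTS
  omega

end Tmap

theorem stmt3_general (m : ℕ) (hm : 2 ≤ m) (A : Matrix (Fin m) (Fin m) ℍ[ℝ]) (q : ℍ[ℝ])
    (hq : q.re = 0) (hne : Tmap m A q ≠ 0) :
    4 ≤ Module.finrank ℝ (LinearMap.range (Tmap m A q)) := by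
  by_cases hq0 : q = 0
  · subst hq0
    exact four_le_finrank_range_of_map_op_smul _
      (fun c => Tmap_op_smul A (Commute.zero_right c).eq) hne
  -- `P = A² + |q|²`: right multiplication by a real number is scalar multiplication.
  set P := Tmap m (A * A) ((Quaternion.normSq q : ℝ) : ℍ[ℝ])
  by_cases hP : P = 0
  · have hA : ∀ x, A *ᵥ x = 0 → x = 0 := fun _ =>
      eq_zero_of_mulVec_eq_zero_of_Tmap_mul_self_eq_zero A (Quaternion.normSq_ne_zero.mpr hq0) hP
    have := two_mul_le_finrank_range_Tmap A hq hA
    omega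
  calc 4 ≤ finrank ℝ (range P) := four_le_finrank_range_of_map_op_smul P
        (fun c => Tmap_op_smul _ (Quaternion.coe_commute _ c).symm.eq) hP
    _ ≤ _ := finrank_range_le_of_ker_le _ _ (ker_Tmap_le_ker_Tmap_mul_self A hq)

/-- For `m ≥ 2`, any nonzero element of `t ⊕ sp(m) ⊂ so(4m)`, where
`sp(m)` consists of quaternionic skew-Hermitian matrices acting on `ℍ^m` and
`t ⊂ Im ℍ` (at most one-dimensional) acts by right scalar multiplication, has real rank
at least `4` as a real endomorphism of `ℝ^{4m} ≅ ℍ^m`. -/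
theorem stmt3 (m : ℕ) (hm : 2 ≤ m) (A : Matrix (Fin m) (Fin m) ℍ[ℝ]) (q : ℍ[ℝ])
    (hA : Aᴴ = -A) (hq : q.re = 0) (hne : Tmap m A q ≠ 0) :
    4 ≤ Module.finrank ℝ (LinearMap.range (Tmap m A q)) :=
  stmt3_general m hm A q hq hne

end
end

section
/- In so(𝕆), the commutator of left multiplication by i and right multiplication by j satisfies [L_i, R_j]|_ℍ = 0 and [L_i, R_j]|_{εℍ} = 2 L_k|_{εℍ}, where 𝕆 = ℍ ⊕ εℍ is the Cayley–Dickson decomposition. -/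
open scoped Quaternion

noncomputable section

/-- The quaternion units inside `𝕆 = ℍ ⊕ εℍ`. -/
def oi : Oct := ((⟨0, 1, 0, 0⟩ : ℍ[ℝ]), 0)
def oj : Oct := ((⟨0, 0, 1, 0⟩ : ℍ[ℝ]), 0)
def ok : Oct := ((⟨0, 0, 0, 1⟩ : ℍ[ℝ]), 0)

theorem omul_inl_inl (p a : ℍ[ℝ]) : omul (p, 0) (a, 0) = (p * a, 0) := by
  simp [omul]

theorem omul_inl_inr (p a : ℍ[ℝ]) : omul (p, 0) (0, a) = (0, a * p) := by
  simp [omul]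

theorem omul_inr_inl (a q : ℍ[ℝ]) : omul (0, a) (q, 0) = (0, a * star q) := by
  simp [omul]

theorem lie_Lo_Ro_inl (p q a : ℍ[ℝ]) : ⁅Lo (p, 0), Ro (q, 0)⁆ ((a, 0) : Oct) = 0 := by
  simp only [Ring.lie_def, LinearMap.sub_apply, Module.End.mul_apply, Lo, Ro,
    LinearMap.coe_mk, AddHom.coe_mk, omul_inl_inl, mul_assoc, sub_self]

/-- On `εℍ` left and right multiplications by `ℍ` both act on the right, with `R_q` acting
through `star q`, so their commutator is right multiplication by a quaternion commutator. -/
theorem lie_Lo_Ro_inr (p q a : ℍ[ℝ]) :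
    ⁅Lo (p, 0), Ro (q, 0)⁆ ((0, a) : Oct) = (0, a * (star q * p - p * star q)) := by
  simp only [Ring.lie_def, LinearMap.sub_apply, Module.End.mul_apply, Lo, Ro,
    LinearMap.coe_mk, AddHom.coe_mk, omul_inl_inr, omul_inr_inl, Prod.mk_sub_mk, sub_self,
    mul_sub, mul_assoc]

theorem star_oj_mul_oi_sub : star oj.1 * oi.1 - oi.1 * star oj.1 = (2 : ℝ) • ok.1 := by
  -- `simp` cannot see through the projections `oi.1`, so unfold them to literals first.
  show star (⟨0, 0, 1, 0⟩ : ℍ[ℝ]) * ⟨0, 1, 0, 0⟩ - ⟨0, 1, 0, 0⟩ * star (⟨0, 0, 1, 0⟩ : ℍ[ℝ]) =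
    (2 : ℝ) • (⟨0, 0, 0, 1⟩ : ℍ[ℝ])
  ext <;> simp; norm_num

/-- In `so(𝕆)`, with the Cayley–Dickson decomposition `𝕆 = ℍ ⊕ εℍ`,
the commutator of left multiplication by `i` and right multiplication by `j` vanishes on
`ℍ` and equals `2·L_k` on `εℍ`. -/
theorem stmt6 :
    (∀ a : ℍ[ℝ], ⁅Lo oi, Ro oj⁆ ((a, 0) : Oct) = 0) ∧
    (∀ a : ℍ[ℝ], ⁅Lo oi, Ro oj⁆ ((0, a) : Oct) = (2 : ℝ) • Lo ok ((0, a) : Oct)) := by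
  refine ⟨fun a => lie_Lo_Ro_inl oi.1 oj.1 a, fun a => ?_⟩
  have hLk : Lo ok ((0, a) : Oct) = (0, a * ok.1) := omul_inl_inr ok.1 a
  rw [hLk, show oi = (oi.1, 0) from rfl, show oj = (oj.1, 0) from rfl, lie_Lo_Ro_inr,
    star_oj_mul_oi_sub, mul_smul_comm, Prod.smul_mk, smul_zero]

end
end

section
/- In so(𝕆), left multiplications satisfy [L_i, L_j]|_ℍ = 2L_k|_ℍ and [L_i, L_j]|_{ℍε} = −2L_k|_{ℍε}, where 𝕆 = ℍ ⊕ ℍε. -/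
open scoped Quaternion

noncomputable section

theorem Quaternion.lie_imI_imJ {R : Type*} [CommRing R] :
    ⁅(⟨0, 1, 0, 0⟩ : ℍ[R]), (⟨0, 0, 1, 0⟩ : ℍ[R])⁆ = (2 : R) • (⟨0, 0, 0, 1⟩ : ℍ[R]) := by
  ext <;> simp [Ring.lie_def, one_add_one_eq_two]

theorem Lo_quat_apply (p a b : ℍ[ℝ]) : Lo (p, 0) (a, b) = (p * a, b * p) := by
  simp [Lo, omul]

/-- On `ℍε` a quaternion acts from the right, which reverses the order of composition and
hence the sign of the commutator. -/
theorem lie_Lo_quat_apply (p q a b : ℍ[ℝ]) :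
    ⁅Lo (p, 0), Lo (q, 0)⁆ (a, b) = (⁅p, q⁆ * a, -(b * ⁅p, q⁆)) := by
  simp only [Ring.lie_def, LinearMap.sub_apply, Module.End.mul_apply, Lo_quat_apply,
    Prod.mk_sub_mk, Prod.mk.injEq]
  constructor <;> noncomm_ring

/-- In `so(𝕆)`, with the Cayley–Dickson decomposition `𝕆 = ℍ ⊕ ℍε`,
the commutator of the left multiplications by `i` and `j` equals `2·L_k` on `ℍ` and
`-2·L_k` on `ℍε`. -/
theorem stmt7 :
    (∀ a : ℍ[ℝ], ⁅Lo oi, Lo oj⁆ ((a, 0) : Oct) = (2 : ℝ) • Lo ok ((a, 0) : Oct)) ∧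
    (∀ a : ℍ[ℝ], ⁅Lo oi, Lo oj⁆ ((0, a) : Oct) = -((2 : ℝ) • Lo ok ((0, a) : Oct))) := by
  have lie_ij : ⁅oi.1, oj.1⁆ = (2 : ℝ) • ok.1 := Quaternion.lie_imI_imJ
  have hLo (q : Oct) (hq : q.2 = 0) : Lo q = Lo (q.1, 0) := by rw [← hq]
  rw [hLo oi rfl, hLo oj rfl, hLo ok rfl]
  refine ⟨fun a => ?_, fun a => ?_⟩ <;> simp [lie_Lo_quat_apply, Lo_quat_apply, lie_ij]

end
end

section
/- In so(p+9) with p ≥ 1, writing 𝕆 = ℍ ⊕ εℍ with orthonormal basis e₁=ε, e₂=εk, e₃=εi, e₄=εj of εℍ and orthonormal e₅,e₆ ∈ ℝ^{p+1}, the elements X = L_i + √2(E₁₅ + E₃₆) and Y = R_j + √2(E₂₅ + E₄₆) commute: [X,Y] = 0. -/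
open scoped Quaternion

noncomputable section

variable {p : ℕ}

/-- `ℝ^{p+9} = 𝕆 ⊕ ℝ^{p+1}`. -/
abbrev Vp (p : ℕ) : Type := Oct × EuclideanSpace ℝ (Fin (p + 1))

/-- The standard inner product on `ℝ^{p+9} = 𝕆 ⊕ ℝ^{p+1}`. -/
def innV (x y : Vp p) : ℝ := innO x.1 y.1 + inner ℝ x.2 y.2

lemma innV_add (x y z : Vp p) : innV (x + y) z = innV x z + innV y z := by
  simp [innV, innO, inner_add_left]; ring

lemma innV_smul (c : ℝ) (x z : Vp p) : innV (c • x) z = c * innV x z := by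
  simp only [innV, innO, Prod.smul_fst, Prod.smul_snd, real_inner_smul_left]; ring

/-- The elementary skew-symmetric endomorphism `E_{uv}` with `E_{uv} u = v`,
`E_{uv} v = -u` (for orthonormal `u, v`):  `x ↦ ⟨x,u⟩v - ⟨x,v⟩u`. -/
def Emap (u v : Vp p) : Vp p →ₗ[ℝ] Vp p where
  toFun x := innV x u • v - innV x v • u
  map_add' x y := by simp only [innV_add, add_smul]; abel
  map_smul' c x := by
    simp only [innV_smul, mul_smul, RingHom.id_apply, smul_sub]

/-- Extension of an endomorphism of `𝕆` by zero on `ℝ^{p+1}`. -/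
def extendO (A : Oct →ₗ[ℝ] Oct) : Vp p →ₗ[ℝ] Vp p :=
  A.prodMap (0 : EuclideanSpace ℝ (Fin (p + 1)) →ₗ[ℝ] EuclideanSpace ℝ (Fin (p + 1)))

def oe : Oct := ((0 : ℍ[ℝ]), 1)


/-!
Write `X = A + √2 P` and `Y = B + √2 Q` with `A = L_i`, `B = R_j` and `P = E₁₅ + E₃₆`,
`Q = E₂₅ + E₄₆`, so that `[X,Y] = [A,B] + √2 ([A,Q] + [P,B]) + 2 [P,Q]`.
The last two terms come from the rule `[T, E_{uv}] = E_{Tu,v} + E_{u,Tv}` for skew `T`.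
As `A` and `B` vanish on `ℝ^{p+1}`, the middle term is
`E_{L_i e₂ - R_j e₁, e₅} + E_{L_i e₄ - R_j e₃, e₆} = 0`; by orthonormality `[P,Q] = E₁₂ + E₃₄`,
which cancels `[L_i, R_j] = -2 (E₁₂ + E₃₄)`.
-/

def IsSkewV (T : Vp p →ₗ[ℝ] Vp p) : Prop :=
  ∀ x y, innV (T x) y = - innV x (T y)

lemma innV_comm (x y : Vp p) : innV x y = innV y x := by
  simp only [innV, innO, real_inner_comm]

lemma innV_neg (x z : Vp p) : innV (-x) z = - innV x z := by
  simpa using innV_smul (-1) x z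

lemma innV_zero (z : Vp p) : innV 0 z = 0 := by
  simpa using innV_smul 0 0 z

lemma Emap_apply (u v x : Vp p) : Emap u v x = innV x u • v - innV x v • u := rfl

lemma Emap_zero_left (v : Vp p) : Emap 0 v = 0 :=
  LinearMap.ext fun x => by simp [Emap_apply, innV_comm x, innV_zero]

lemma Emap_zero_right (u : Vp p) : Emap u 0 = 0 :=
  LinearMap.ext fun x => by simp [Emap_apply, innV_comm x, innV_zero]

lemma Emap_swap (u v : Vp p) : Emap v u = -Emap u v :=
  LinearMap.ext fun x => by simp only [Emap_apply, LinearMap.neg_apply, neg_sub]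

lemma Emap_neg_right (u v : Vp p) : Emap u (-v) = -Emap u v :=
  LinearMap.ext fun x => by
    simp only [Emap_apply, LinearMap.neg_apply, innV_comm x, innV_neg, smul_neg, neg_smul]
    abel

lemma isSkewV_Emap (u v : Vp p) : IsSkewV (Emap u v) := by
  intro x y
  simp only [Emap_apply, sub_eq_add_neg, ← neg_smul, innV_add, innV_smul, innV_comm x,
    innV_comm y]
  ring

lemma lie_Emap_of_isSkewV {T : Vp p →ₗ[ℝ] Vp p} (hT : IsSkewV T) (u v : Vp p) :
    ⁅T, Emap u v⁆ = Emap (T u) v + Emap u (T v) :=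
  LinearMap.ext fun x => by
    simp only [Ring.lie_def, LinearMap.sub_apply, Module.End.mul_apply, LinearMap.add_apply,
      Emap_apply, map_sub, map_smul, hT x u, hT x v, innV_comm x]
    module

lemma lie_Emap_Emap_of_orthogonal {a b c d : Vp p} (hca : innV c a = 0) (hcb : innV c b = 0)
    (hda : innV d a = 0) (hdb : innV d b = 0) : ⁅Emap a b, Emap c d⁆ = 0 := by
  rw [lie_Emap_of_isSkewV (isSkewV_Emap a b), Emap_apply, Emap_apply, hca, hcb, hda, hdb]
  simp [Emap_zero_left, Emap_zero_right]

lemma lie_Emap_Emap_of_orthonormal {a b c : Vp p} (hba : innV b a = 0) (hbc : innV b c = 0)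
    (hca : innV c a = 0) (hcc : innV c c = 1) : ⁅Emap a c, Emap b c⁆ = Emap a b := by
  rw [lie_Emap_of_isSkewV (isSkewV_Emap a c), Emap_apply, Emap_apply, hba, hbc, hca, hcc]
  simp [Emap_zero_left, Emap_neg_right, Emap_swap b a]

lemma extendO_apply (A : Oct →ₗ[ℝ] Oct) (x : Vp p) : extendO A x = (A x.1, 0) := rfl

lemma IsSkewO.isSkewV_extendO {A : Oct →ₗ[ℝ] Oct} (hA : IsSkewO A) :
    IsSkewV (extendO (p := p) A) := by
  intro x y
  simp [innV, extendO_apply, hA x.1 y.1]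

lemma isSkewO_Lo {q : Oct} (hq : q ∈ ImO) : IsSkewO (Lo q) := by
  intro x y
  simp only [Lo, omul, innO, LinearMap.coe_mk, AddHom.coe_mk, Quaternion.inner_def]
  simp only [ImO, Set.mem_ofPred_eq] at hq
  simp [Quaternion.re_mul, hq]
  ring

lemma isSkewO_Ro {q : Oct} (hq : q ∈ ImO) : IsSkewO (Ro q) := by
  intro x y
  simp only [Ro, omul, innO, LinearMap.coe_mk, AddHom.coe_mk, Quaternion.inner_def]
  simp only [ImO, Set.mem_ofPred_eq] at hq
  simp [Quaternion.re_mul, hq]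
  ring

-- Unfolding `oi` exposes a `QuaternionAlgebra.mk` on which the `Quaternion` simp lemmas
-- do not fire, so the units are accessed through their coordinates.
@[simp] lemma oi_fst_re : oi.1.re = 0 := rfl
@[simp] lemma oi_fst_imI : oi.1.imI = 1 := rfl
@[simp] lemma oi_fst_imJ : oi.1.imJ = 0 := rfl
@[simp] lemma oi_fst_imK : oi.1.imK = 0 := rfl
@[simp] lemma oi_snd : oi.2 = 0 := rfl
@[simp] lemma oj_fst_re : oj.1.re = 0 := rfl
@[simp] lemma oj_fst_imI : oj.1.imI = 0 := rfl
@[simp] lemma oj_fst_imJ : oj.1.imJ = 1 := rfl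
@[simp] lemma oj_fst_imK : oj.1.imK = 0 := rfl
@[simp] lemma oj_snd : oj.2 = 0 := rfl
@[simp] lemma ok_fst_re : ok.1.re = 0 := rfl
@[simp] lemma ok_fst_imI : ok.1.imI = 0 := rfl
@[simp] lemma ok_fst_imJ : ok.1.imJ = 0 := rfl
@[simp] lemma ok_fst_imK : ok.1.imK = 1 := rfl
@[simp] lemma ok_snd : ok.2 = 0 := rfl
@[simp] lemma oe_fst : oe.1 = 0 := rfl
@[simp] lemma oe_snd : oe.2 = 1 := rfl

lemma Lo_oi_omul_oe_ok : Lo oi (omul oe ok) = Ro oj oe := by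
  ext <;> simp [Lo, Ro, omul, Quaternion.re_mul]

lemma Lo_oi_omul_oe_oj : Lo oi (omul oe oj) = Ro oj (omul oe oi) := by
  ext <;> simp [Lo, Ro, omul, Quaternion.re_mul]

lemma lie_extendO_Lo_oi_Ro_oj :
    ⁅extendO (p := p) (Lo oi), extendO (Ro oj)⁆ =
      (-2 : ℝ) • (Emap ((oe, 0) : Vp p) (omul oe ok, 0) + Emap (omul oe oi, 0) (omul oe oj, 0)) :=
  LinearMap.ext fun x => by
    obtain ⟨⟨a, b⟩, w⟩ := x
    simp only [Ring.lie_def, LinearMap.sub_apply, Module.End.mul_apply, LinearMap.add_apply,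
      LinearMap.smul_apply, Emap_apply, extendO_apply, innV, innO]
    ext <;> simp [Lo, Ro, omul, Quaternion.inner_def, Quaternion.re_mul] <;> ring

lemma lie_add_smul_add_smul {R L : Type*} [CommRing R] [LieRing L] [LieAlgebra R L]
    (A B P Q : L) (c : R) :
    ⁅A + c • P, B + c • Q⁆ = ⁅A, B⁆ + c • (⁅A, Q⁆ + ⁅P, B⁆) + (c * c) • ⁅P, Q⁆ := by
  simp only [add_lie, lie_add, smul_lie, lie_smul, smul_add, mul_smul]
  abel

/-- In `so(p+9)` with `p ≥ 1`, writing `𝕆 = ℍ ⊕ εℍ` with orthonormal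
basis `e₁ = ε`, `e₂ = εk`, `e₃ = εi`, `e₄ = εj` of `εℍ` and orthonormal
`e₅, e₆ ∈ ℝ^{p+1}`, the elements `X = L_i + √2(E₁₅ + E₃₆)` and
`Y = R_j + √2(E₂₅ + E₄₆)` commute:  `[X,Y] = 0`. -/
theorem stmt9 (p : ℕ) (hp : 1 ≤ p) :
    let e₁ : Vp p := (oe, 0)
    let e₂ : Vp p := (omul oe ok, 0)
    let e₃ : Vp p := (omul oe oi, 0)
    let e₄ : Vp p := (omul oe oj, 0)
    let e₅ : Vp p := (0, EuclideanSpace.single 0 1)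
    let e₆ : Vp p := (0, EuclideanSpace.single 1 1)
    let X := extendO (Lo oi) + Real.sqrt 2 • (Emap e₁ e₅ + Emap e₃ e₆)
    let Y := extendO (Ro oj) + Real.sqrt 2 • (Emap e₂ e₅ + Emap e₄ e₆)
    ⁅X, Y⁆ = 0 := by
  intro e₁ e₂ e₃ e₄ e₅ e₆ X Y
  -- the commutator bracket on endomorphisms has no global `LieRing` instance
  let _ : LieRing (Vp p →ₗ[ℝ] Vp p) := LieRing.ofAssociativeRing
  set A : Vp p →ₗ[ℝ] Vp p := extendO (Lo oi)
  set B : Vp p →ₗ[ℝ] Vp p := extendO (Ro oj)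
  set P := Emap e₁ e₅ + Emap e₃ e₆
  set Q := Emap e₂ e₅ + Emap e₄ e₆
  have hA : IsSkewV A := (isSkewO_Lo rfl).isSkewV_extendO
  have hB : IsSkewV B := (isSkewO_Ro rfl).isSkewV_extendO
  have mixed : ⁅A, Q⁆ + ⁅P, B⁆ = 0 := by
    rw [← lie_skew P B]
    simp only [P, Q, lie_add, lie_Emap_of_isSkewV hA, lie_Emap_of_isSkewV hB, A, B, e₁, e₂, e₃,
      e₄, e₅, e₆, extendO_apply, map_zero, Prod.mk_zero_zero, Emap_zero_right, add_zero,
      Lo_oi_omul_oe_ok, Lo_oi_omul_oe_oj]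
    abel
  have : NeZero p := ⟨by omega⟩
  have h01 : (0 : Fin (p + 1)) ≠ 1 := zero_ne_one
  have quadratic : ⁅P, Q⁆ = Emap e₁ e₂ + Emap e₃ e₄ := by
    rw [add_lie, lie_add, lie_add, lie_Emap_Emap_of_orthonormal, lie_Emap_Emap_of_orthogonal,
      lie_Emap_Emap_of_orthogonal, lie_Emap_Emap_of_orthonormal, add_zero, zero_add]
    all_goals simp [e₁, e₂, e₃, e₄, e₅, e₆, innV, innO, omul, Quaternion.inner_def,
      Quaternion.re_mul, EuclideanSpace.inner_single_left, h01, h01.symm]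
  have expand : ⁅X, Y⁆ = ⁅A, B⁆ + √2 • (⁅A, Q⁆ + ⁅P, B⁆) + (√2 * √2) • ⁅P, Q⁆ :=
    lie_add_smul_add_smul A B P Q √2
  rw [expand, lie_extendO_Lo_oi_Ro_oj, mixed, quadratic, Real.mul_self_sqrt zero_le_two]
  module
end
end

section
/- An irreducible representation of so(2k+1) (k ≥ 1) factors through so(2k+1) = spin(2k+1)/center (i.e., is not of spin type) if and only if it has 0 as a weight. -/
open scoped Matrix
open Complex

noncomputable section

/-- The standard Cartan generators `H_i = E_{2i,2i+1} - E_{2i+1,2i}` of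
`so(2k+1, ℂ)` (skew-symmetric matrices), `i = 0, …, k-1`. -/
def Hmat (k : ℕ) (i : Fin k) : Matrix (Fin (2 * k + 1)) (Fin (2 * k + 1)) ℂ :=
  Matrix.single ⟨2 * i.val, by omega⟩ ⟨2 * i.val + 1, by omega⟩ 1 -
    Matrix.single ⟨2 * i.val + 1, by omega⟩ ⟨2 * i.val, by omega⟩ 1

/-!
Write `S_{pq} = E_{pq} - E_{qp}`, so that `H_j = S_{2j,2j+1}`, and `r = 2k` for the last
coordinate. The elements `h = -2I·H_j`, `e = S_{2j+1,r} - I·S_{2j,r}` and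
`f = -S_{2j+1,r} - I·S_{2j,r}` form an `sl₂`-triple commuting with every `H_l`, `l ≠ j`. If all
weights are integral, start from a common eigenvector of the commuting `H_l`: its `h`-eigenvalue
is an even integer, so moving up with `e` to a primitive vector and then down with `f` by half its
weight reaches a vector killed by `H_j`, while the eigenvalues of the other `H_l` are unchanged.
Doing this for every `j` produces a zero weight.

Conversely, `ad H_j` satisfies `ad³ = -ad` on skew matrices, so every skew matrix is a sum of
`ad H_j`-eigenvectors with eigenvalues `0, ±I`. Hence the sum of the generalised eigenspaces of
`H_j` with eigenvalues in `ℤ·I` is a subrepresentation. It contains a zero-weight vector, so by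
irreducibility it is everything, and every eigenvalue of `H_j` lies in `ℤ·I`.
-/

section

attribute [local instance 100] LieRing.ofAssociativeRing

namespace IsSl2Triple

open LieModule

variable {K L M : Type*} [Field K] [CharZero K] [LieRing L] [LieAlgebra K L]
  [AddCommGroup M] [Module K M] [LieRingModule L M] [LieModule K L M] [FiniteDimensional K M]
  {h e f : L}

theorem exists_pow_toEnd_e_eq_zero (t : IsSl2Triple h e f) {m : M} {μ : K}
    (hm : ⁅h, m⁆ = μ • m) : ∃ n, (toEnd K L M e ^ n) m = 0 := by
  by_contra! hne
  refine Module.Finite.not_linearIndependent_of_infinite _ <|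
    (toEnd K L M h).eigenvectors_linearIndependent' (fun n : ℕ ↦ μ + 2 * n) ?_
      (fun n ↦ (toEnd K L M e ^ n) m) fun n ↦ ?_
  · intro a b hab
    simpa using hab
  · exact ⟨Module.End.mem_eigenspace_iff.mpr (t.lie_h_pow_toEnd_e hm n), hne n⟩

theorem exists_mem_ne_zero_lie_h_eq_zero (t : IsSl2Triple h e f) (P : Submodule K M)
    (hPe : ∀ v ∈ P, ⁅e, v⁆ ∈ P) (hPf : ∀ v ∈ P, ⁅f, v⁆ ∈ P) {m : M} (hmP : m ∈ P) (hm : m ≠ 0)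
    (n : ℤ) (hmn : ⁅h, m⁆ = (2 * n : K) • m) : ∃ w ∈ P, w ≠ 0 ∧ ⁅h, w⁆ = 0 := by
  obtain ⟨r, hr, hr'⟩ := Nat.exists_not_and_succ_of_not_zero_of_exists (by simpa using hm)
    (t.exists_pow_toEnd_e_eq_zero hmn)
  have hprim : t.HasPrimitiveVectorWith ((toEnd K L M e ^ r) m) (2 * n + 2 * r : K) :=
    { ne_zero := hr
      lie_h := t.lie_h_pow_toEnd_e hmn r
      lie_e := by rwa [lie_e_pow_toEnd_e] }
  obtain ⟨s, hs⟩ := hprim.exists_nat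
  have hs_even : (s : ℤ) = 2 * (n + r) :=
    Int.cast_injective (α := K) (by push_cast; linear_combination -hs)
  obtain ⟨j, rfl⟩ : ∃ j, s = 2 * j := ⟨s / 2, by omega⟩
  refine ⟨(toEnd K L M f ^ j) ((toEnd K L M e ^ r) m), ?_,
    hprim.pow_toEnd_f_ne_zero_of_eq_nat hs (by omega), ?_⟩
  · exact Module.End.pow_apply_mem_of_forall_mem (f' := toEnd K L M f) _ hPf _
      (Module.End.pow_apply_mem_of_forall_mem (f' := toEnd K L M e) _ hPe _ hmP)
  · rw [hprim.lie_h_pow_toEnd_f, hs]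
    simp

end IsSl2Triple

namespace Module.End

variable {K V : Type*} [Field K] [AddCommGroup V] [Module K V]

-- A minimal nonzero invariant subspace is an eigenspace of every `f i`.
theorem exists_forall_apply_eq_smul_of_commute [IsAlgClosed K] [FiniteDimensional K V]
    [Nontrivial V] {ι : Type*} (f : ι → Module.End K V) (hf : ∀ i j, Commute (f i) (f j)) :
    ∃ v : V, v ≠ 0 ∧ ∃ c : ι → K, ∀ i, f i v = c i • v := by
  set S := {P : Submodule K V | P ≠ ⊥ ∧ ∀ i, ∀ v ∈ P, f i v ∈ P}
  obtain ⟨P, ⟨hP0, hPf⟩, hPmin⟩ := wellFounded_lt.has_min S ⟨⊤, top_ne_bot, by simp⟩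
  have hscalar i : ∃ μ : K, ∀ v ∈ P, f i v = μ • v := by
    have : Nontrivial P := Submodule.nontrivial_iff_ne_bot.mpr hP0
    obtain ⟨μ, hμ⟩ := exists_eigenvalue ((f i).restrict (hPf i))
    obtain ⟨x, hx, hx0⟩ := hμ.exists_hasEigenvector
    set Q := P ⊓ (f i).eigenspace μ
    have hQ : Q ∈ S := by
      refine ⟨(Submodule.ne_bot_iff Q).mpr ⟨x, ⟨x.2, ?_⟩, by simpa using hx0⟩,
        fun j v hv ↦ ⟨hPf j v hv.1, ?_⟩⟩
      · simpa [mem_eigenspace_iff, Subtype.ext_iff] using mem_eigenspace_iff.mp hx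
      · rw [SetLike.mem_coe, mem_eigenspace_iff, ← mul_apply, hf i j, mul_apply,
          mem_eigenspace_iff.mp hv.2, map_smul]
    have hQP : Q = P := inf_le_left.eq_of_not_lt (hPmin Q hQ)
    exact ⟨μ, fun v hv ↦ mem_eigenspace_iff.mp (hQP ▸ hv).2⟩
  choose c hc using hscalar
  obtain ⟨v, hvP, hv0⟩ := Submodule.exists_mem_ne_zero_of_ne_bot hP0
  exact ⟨v, hv0, c, fun i ↦ hc i v hvP⟩

theorem mapsTo_maxGenEigenspace_of_lie_eq_smul {X Y : Module.End K V} {s : K}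
    (hXY : ⁅X, Y⁆ = s • Y) (μ : K) :
    Set.MapsTo Y (X.maxGenEigenspace μ) (X.maxGenEigenspace (μ + s)) := by
  intro v hv
  rw [SetLike.mem_coe, mem_maxGenEigenspace] at hv ⊢
  obtain ⟨m, hm⟩ := hv
  have hsemi : SemiconjBy Y (X - μ • 1) (X - (μ + s) • 1) := by
    rw [Ring.lie_def, sub_eq_iff_eq_add] at hXY
    simp only [SemiconjBy, mul_sub, sub_mul, hXY, mul_smul_comm, smul_mul_assoc, mul_one, one_mul]
    module
  refine ⟨m, ?_⟩
  rw [← mul_apply, ← (hsemi.pow_right m).eq, mul_apply, hm, map_zero]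

theorem mapsTo_iSup_maxGenEigenspace_of_lie_eq_smul {X Y : Module.End K V} {s : K}
    (Γ : AddSubgroup K) (hs : s ∈ Γ) (hXY : ⁅X, Y⁆ = s • Y) :
    Set.MapsTo Y ↑(⨆ μ : Γ, X.maxGenEigenspace μ) ↑(⨆ μ : Γ, X.maxGenEigenspace μ) := by
  intro v hv
  induction hv using Submodule.iSup_induction' with
  | mem μ v hv =>
    exact Submodule.mem_iSup_of_mem (⟨μ + s, Γ.add_mem μ.2 hs⟩ : Γ)
      (mapsTo_maxGenEigenspace_of_lie_eq_smul hXY μ hv)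
  | zero => simp
  | add v w _ _ hv hw => simpa using Submodule.add_mem _ hv hw

theorem HasEigenvector.mem_of_mem_iSup_maxGenEigenspace {X : Module.End K V} {c : K} {v : V}
    (hv : X.HasEigenvector c v) {Γ : AddSubgroup K} (hvΓ : v ∈ ⨆ μ : Γ, X.maxGenEigenspace μ) :
    c ∈ Γ := by
  by_contra hc
  have hle : ⨆ μ : Γ, X.maxGenEigenspace μ ≤ ⨆ μ ∈ {μ | μ ≠ c}, X.maxGenEigenspace μ :=
    iSup_le fun μ ↦ le_biSup _ fun h ↦ hc (h ▸ μ.2)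
  have hdisj := X.independent_maxGenEigenspace.disjoint_biSup (show c ∉ {μ | μ ≠ c} by simp)
  exact hv.2 (Submodule.disjoint_def.mp hdisj v (eigenspace_le_maxGenEigenspace hv.1) (hle hvΓ))

end Module.End

namespace Matrix

open LieAlgebra.Orthogonal

variable (R : Type*) [CommRing R] {N : Type*} [DecidableEq N]

def skewSingle (p q : N) : Matrix N N R :=
  single p q 1 - single q p 1

variable {R}

theorem skewSingle_transpose (p q : N) : (skewSingle R p q)ᵀ = -skewSingle R p q := by
  simp [skewSingle, transpose_sub, transpose_single]

theorem skewSingle_swap (p q : N) : skewSingle R q p = -skewSingle R p q := by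
  simp [skewSingle]

variable [Fintype N]

theorem skewSingle_mem_so (p q : N) : skewSingle R p q ∈ so N R :=
  (mem_so N R _).mpr (skewSingle_transpose p q)

theorem lie_skewSingle_skewSingle_chain {p q r : N} (hpq : p ≠ q) (hqr : q ≠ r) (hpr : p ≠ r) :
    ⁅skewSingle R p q, skewSingle R q r⁆ = skewSingle R p r := by
  simp [Ring.lie_def, skewSingle, sub_mul, mul_sub, single_mul_single_of_ne, hpq, hqr, hpr,
    hpq.symm, hqr.symm, hpr.symm]

theorem lie_skewSingle_skewSingle_of_disjoint {p q r s : N} (hpr : p ≠ r) (hps : p ≠ s)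
    (hqr : q ≠ r) (hqs : q ≠ s) : ⁅skewSingle R p q, skewSingle R r s⁆ = 0 := by
  simp [Ring.lie_def, skewSingle, sub_mul, mul_sub, single_mul_single_of_ne, hpr, hps, hqr, hqs,
    hpr.symm, hps.symm, hqr.symm, hqs.symm]

theorem lie_skewSingle_apply (p q : N) (A : Matrix N N R) (x y : N) :
    ⁅skewSingle R p q, A⁆ x y =
      (if x = p then A q y else 0) - (if x = q then A p y else 0)
        - ((if y = q then A x p else 0) - (if y = p then A x q else 0)) := by
  simp [Ring.lie_def, skewSingle, sub_mul, mul_sub, mul_apply, single_apply, ite_and, eq_comm]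

theorem lie_skewSingle_lie_skewSingle_lie_skewSingle [NoZeroDivisors R] [CharZero R] {p q : N}
    (hpq : p ≠ q) {A : Matrix N N R} (hA : Aᵀ = -A) :
    ⁅skewSingle R p q, ⁅skewSingle R p q, ⁅skewSingle R p q, A⁆⁆⁆ = -⁅skewSingle R p q, A⁆ := by
  have hskew x y : A y x = -A x y := by simpa using congrFun (congrFun hA x) y
  have hqp := hskew p q
  have hpp : A p p = 0 := self_eq_neg.mp (hskew p p)
  have hqq : A q q = 0 := self_eq_neg.mp (hskew q q)
  clear hskew hA
  ext x y
  simp only [lie_skewSingle_apply, neg_apply]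
  by_cases hxp : x = p <;> by_cases hxq : x = q <;> by_cases hyp : y = p <;>
    by_cases hyq : y = q <;> simp_all

theorem isSl2Triple_skewSingle {p q r : N} (hpq : p ≠ q) (hqr : q ≠ r) (hpr : p ≠ r) :
    IsSl2Triple ((-2 * I) • skewSingle ℂ p q) (skewSingle ℂ q r - I • skewSingle ℂ p r)
      (-skewSingle ℂ q r - I • skewSingle ℂ p r) := by
  have hpq_qr := lie_skewSingle_skewSingle_chain (R := ℂ) hpq hqr hpr
  have hpq_pr : ⁅skewSingle ℂ p q, skewSingle ℂ p r⁆ = -skewSingle ℂ q r := by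
    rw [skewSingle_swap q p, neg_lie, lie_skewSingle_skewSingle_chain hpq.symm hpr hqr]
  have hqr_pr : ⁅skewSingle ℂ q r, skewSingle ℂ p r⁆ = skewSingle ℂ p q := by
    rw [skewSingle_swap r p, lie_neg, lie_skewSingle_skewSingle_chain hqr hpr.symm hpq.symm,
      skewSingle_swap p q, neg_neg]
  refine ⟨?_, ?_, ?_, ?_⟩
  · refine smul_ne_zero (by simp) fun h ↦ ?_
    simpa [skewSingle, single_apply, hpq] using congrFun (congrFun h p) q
  · simp only [lie_sub, sub_lie, lie_neg, lie_smul, smul_lie, lie_self, hqr_pr,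
      ← lie_skew (skewSingle ℂ p r), smul_neg]
    match_scalars
    ring
  · simp only [lie_sub, lie_smul, smul_lie, hpq_qr, hpq_pr, smul_neg, smul_smul, two_nsmul]
    match_scalars
    · ring
    · linear_combination -2 * I_sq
  · simp only [lie_sub, lie_neg, lie_smul, smul_lie, hpq_qr, hpq_pr, smul_neg, smul_smul,
      two_nsmul]
    match_scalars
    · ring
    · linear_combination -2 * I_sq

-- Since `ad³ = -ad`, the components are `A + ad² A` and `-(ad² A ± I·ad A) / 2`.
theorem exists_decomposition_lie_skewSingle {p q : N} (hpq : p ≠ q) {A : Matrix N N ℂ}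
    (hA : Aᵀ = -A) :
    ∃ A₀ Aₚ Aₘ : Matrix N N ℂ, A₀ᵀ = -A₀ ∧ Aₚᵀ = -Aₚ ∧ Aₘᵀ = -Aₘ ∧ A = A₀ + Aₚ + Aₘ ∧
      ⁅skewSingle ℂ p q, A₀⁆ = 0 ∧ ⁅skewSingle ℂ p q, Aₚ⁆ = I • Aₚ ∧
        ⁅skewSingle ℂ p q, Aₘ⁆ = -I • Aₘ := by
  set S := skewSingle ℂ p q
  have hcube : ⁅S, ⁅S, ⁅S, A⁆⁆⁆ = -⁅S, A⁆ := lie_skewSingle_lie_skewSingle_lie_skewSingle hpq hA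
  have hA' : A ∈ so N ℂ := (mem_so N ℂ A).mpr hA
  have hB : ⁅S, A⁆ ∈ so N ℂ := (so N ℂ).lie_mem (skewSingle_mem_so p q) hA'
  have hC : ⁅S, ⁅S, A⁆⁆ ∈ so N ℂ := (so N ℂ).lie_mem (skewSingle_mem_so p q) hB
  refine ⟨A + ⁅S, ⁅S, A⁆⁆, (-2⁻¹ : ℂ) • (⁅S, ⁅S, A⁆⁆ + I • ⁅S, A⁆),
    (-2⁻¹ : ℂ) • (⁅S, ⁅S, A⁆⁆ - I • ⁅S, A⁆), (mem_so N ℂ _).mp (add_mem hA' hC),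
    (mem_so N ℂ _).mp ((so N ℂ).smul_mem _ (add_mem hC ((so N ℂ).smul_mem _ hB))),
    (mem_so N ℂ _).mp ((so N ℂ).smul_mem _ (sub_mem hC ((so N ℂ).smul_mem _ hB))),
    by module, ?_, ?_, ?_⟩ <;>
  simp only [lie_add, lie_sub, lie_smul, hcube] <;> match_scalars <;> ring_nf <;> norm_num [I_sq]

end Matrix

section Representation

open Matrix LieAlgebra.Orthogonal

variable {N V : Type*} [DecidableEq N] [Fintype N] [AddCommGroup V] [Module ℂ V]
  (φ : Matrix N N ℂ →ₗ[ℂ] Module.End ℂ V)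

theorem commute_of_lie_eq_zero
    (hφ : ∀ A B : Matrix N N ℂ, Aᵀ = -A → Bᵀ = -B → φ ⁅A, B⁆ = ⁅φ A, φ B⁆)
    {A B : Matrix N N ℂ} (hA : Aᵀ = -A) (hB : Bᵀ = -B) (hAB : ⁅A, B⁆ = 0) :
    Commute (φ A) (φ B) := by
  rw [commute_iff_lie_eq, ← hφ A B hA hB, hAB, map_zero]

theorem isSl2Triple_map
    (hφ : ∀ A B : Matrix N N ℂ, Aᵀ = -A → Bᵀ = -B → φ ⁅A, B⁆ = ⁅φ A, φ B⁆)
    {h e f : Matrix N N ℂ} (hh : h ∈ so N ℂ) (he : e ∈ so N ℂ) (hf : f ∈ so N ℂ)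
    (t : IsSl2Triple h e f) (hφh : φ h ≠ 0) : IsSl2Triple (φ h) (φ e) (φ f) := by
  rw [mem_so] at hh he hf
  exact
    { h_ne_zero := hφh
      lie_e_f := by rw [← hφ e f he hf, t.lie_e_f]
      lie_h_e_nsmul := by rw [← hφ h e hh he, t.lie_h_e_nsmul, map_nsmul]
      lie_h_f_nsmul := by rw [← hφ h f hh hf, t.lie_h_f_nsmul, map_neg, map_nsmul] }

theorem exists_mem_ne_zero_apply_skewSingle_eq_zero [FiniteDimensional ℂ V]
    (hφ : ∀ A B : Matrix N N ℂ, Aᵀ = -A → Bᵀ = -B → φ ⁅A, B⁆ = ⁅φ A, φ B⁆)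
    {p q r : N} (hpq : p ≠ q) (hqr : q ≠ r) (hpr : p ≠ r) (P : Submodule ℂ V)
    (hPqr : ∀ v ∈ P, φ (skewSingle ℂ q r) v ∈ P) (hPpr : ∀ v ∈ P, φ (skewSingle ℂ p r) v ∈ P)
    {u : V} (huP : u ∈ P) (hu : u ≠ 0) (n : ℤ) (hun : φ (skewSingle ℂ p q) u = (n * I) • u) :
    ∃ w ∈ P, w ≠ 0 ∧ φ (skewSingle ℂ p q) w = 0 := by
  by_cases h0 : φ (skewSingle ℂ p q) = 0
  · exact ⟨u, huP, hu, by rw [h0, LinearMap.zero_apply]⟩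
  have t := isSl2Triple_map φ hφ ((so N ℂ).smul_mem _ (skewSingle_mem_so p q))
    (sub_mem (skewSingle_mem_so q r) ((so N ℂ).smul_mem _ (skewSingle_mem_so p r)))
    (sub_mem (neg_mem (skewSingle_mem_so q r)) ((so N ℂ).smul_mem _ (skewSingle_mem_so p r)))
    (isSl2Triple_skewSingle hpq hqr hpr) (by rw [map_smul]; exact smul_ne_zero (by simp) h0)
  have hweight : ⁅φ ((-2 * I) • skewSingle ℂ p q), u⁆ = (2 * n : ℂ) • u := by
    simp only [Module.End.lie_apply, map_smul, LinearMap.smul_apply, hun, smul_smul]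
    match_scalars
    linear_combination -2 * n * I_sq
  obtain ⟨w, hwP, hw, hhw⟩ := t.exists_mem_ne_zero_lie_h_eq_zero P
    (fun v hv ↦ by simpa using P.sub_mem (hPqr v hv) (P.smul_mem I (hPpr v hv)))
    (fun v hv ↦ by simpa using P.sub_mem (P.neg_mem (hPqr v hv)) (P.smul_mem I (hPpr v hv)))
    huP hu n hweight
  exact ⟨w, hwP, hw, by simpa using hhw⟩

theorem mapsTo_iSup_maxGenEigenspace_zmultiples_I
    (hφ : ∀ A B : Matrix N N ℂ, Aᵀ = -A → Bᵀ = -B → φ ⁅A, B⁆ = ⁅φ A, φ B⁆)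
    {p q : N} (hpq : p ≠ q) {A : Matrix N N ℂ} (hA : Aᵀ = -A) :
    Set.MapsTo (φ A)
      ↑(⨆ μ : AddSubgroup.zmultiples I, (φ (skewSingle ℂ p q)).maxGenEigenspace μ)
      ↑(⨆ μ : AddSubgroup.zmultiples I, (φ (skewSingle ℂ p q)).maxGenEigenspace μ) := by
  have hshift {B : Matrix N N ℂ} (hB : Bᵀ = -B) {s : ℂ} (hs : s ∈ AddSubgroup.zmultiples I)
      (hSB : ⁅skewSingle ℂ p q, B⁆ = s • B) :=
    Module.End.mapsTo_iSup_maxGenEigenspace_of_lie_eq_smul (Y := φ B) _ hs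
      (by rw [← hφ _ B (skewSingle_transpose p q) hB, hSB, map_smul])
  obtain ⟨A₀, Aₚ, Aₘ, h₀, hₚ, hₘ, rfl, hS₀, hSₚ, hSₘ⟩ := exists_decomposition_lie_skewSingle hpq hA
  intro v hv
  simp only [map_add, LinearMap.add_apply]
  refine add_mem (add_mem ?_ ?_) ?_
  · exact hshift h₀ (zero_mem _) (by rw [hS₀, zero_smul]) hv
  · exact hshift hₚ (AddSubgroup.mem_zmultiples I) hSₚ hv
  · exact hshift hₘ (neg_mem (AddSubgroup.mem_zmultiples I)) hSₘ hv

end Representation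

section Cartan

open Matrix

variable {k : ℕ} {V : Type*} [AddCommGroup V] [Module ℂ V]
  (φ : Matrix (Fin (2 * k + 1)) (Fin (2 * k + 1)) ℂ →ₗ[ℂ] Module.End ℂ V)

theorem Hmat_eq_skewSingle (i : Fin k) :
    Hmat k i = skewSingle ℂ ⟨2 * i, by omega⟩ ⟨2 * i + 1, by omega⟩ :=
  rfl

theorem Hmat_transpose (i : Fin k) : (Hmat k i)ᵀ = -Hmat k i :=
  skewSingle_transpose _ _

theorem lie_Hmat_skewSingle_eq_zero {j : Fin k} {a b : Fin (2 * k + 1)} (ha : (a : ℕ) / 2 ≠ j)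
    (hb : (b : ℕ) / 2 ≠ j) : ⁅Hmat k j, skewSingle ℂ a b⁆ = 0 := by
  rw [Hmat_eq_skewSingle]
  exact lie_skewSingle_skewSingle_of_disjoint (by simp [Fin.ext_iff]; omega)
    (by simp [Fin.ext_iff]; omega) (by simp [Fin.ext_iff]; omega) (by simp [Fin.ext_iff]; omega)

theorem exists_weight_vector_update_eq_zero [FiniteDimensional ℂ V]
    (hφ : ∀ A B : Matrix _ _ ℂ, Aᵀ = -A → Bᵀ = -B → φ ⁅A, B⁆ = ⁅φ A, φ B⁆) {u : V} (hu : u ≠ 0)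
    {d : Fin k → ℂ} (hud : ∀ j, φ (Hmat k j) u = d j • u) {i : Fin k} {n : ℤ}
    (hdi : d i = n * I) :
    ∃ w : V, w ≠ 0 ∧ ∀ j, φ (Hmat k j) w = Function.update d i 0 j • w := by
  let P : Submodule ℂ V := ⨅ j, ⨅ (_ : j ≠ i), (φ (Hmat k j)).eigenspace (d j)
  have hP {v : V} : v ∈ P ↔ ∀ j ≠ i, φ (Hmat k j) v = d j • v := by
    simp [P]
  have hPinv (a : Fin (2 * k + 1)) (ha : (a : ℕ) / 2 = i) (v : V) (hv : v ∈ P) :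
      φ (skewSingle ℂ a (Fin.last _)) v ∈ P := by
    refine hP.mpr fun j hj ↦ ?_
    have hc := commute_of_lie_eq_zero φ hφ (Hmat_transpose j) (skewSingle_transpose _ _)
      (lie_Hmat_skewSingle_eq_zero (a := a) (b := Fin.last _) (by omega) (by simp; omega))
    rw [← Module.End.mul_apply, hc.eq, Module.End.mul_apply, hP.mp hv j hj, map_smul]
  obtain ⟨w, hwP, hw, hw0⟩ := exists_mem_ne_zero_apply_skewSingle_eq_zero φ hφ
    (p := ⟨2 * i, by omega⟩) (q := ⟨2 * i + 1, by omega⟩) (r := Fin.last _)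
    (by simp [Fin.ext_iff]) (by simp [Fin.ext_iff]; omega) (by simp [Fin.ext_iff]; omega) P
    (hPinv _ (by simp; omega)) (hPinv _ (by simp)) (hP.mpr fun j _ ↦ hud j) hu n
    (by rw [← Hmat_eq_skewSingle, hud, hdi])
  refine ⟨w, hw, fun j ↦ ?_⟩
  rcases eq_or_ne j i with rfl | hj
  · rw [Function.update_self, zero_smul, Hmat_eq_skewSingle]
    exact hw0
  · rw [Function.update_of_ne hj]
    exact hP.mp hwP j hj

theorem exists_weight_vector_eq_zero_of_integral [FiniteDimensional ℂ V] [Nontrivial V]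
    (hφ : ∀ A B : Matrix _ _ ℂ, Aᵀ = -A → Bᵀ = -B → φ ⁅A, B⁆ = ⁅φ A, φ B⁆)
    (hint : ∀ c : Fin k → ℂ, (∃ v : V, v ≠ 0 ∧ ∀ i, φ (Hmat k i) v = c i • v) →
      ∀ i, ∃ n : ℤ, c i = n * I) :
    ∃ v : V, v ≠ 0 ∧ ∀ i, φ (Hmat k i) v = 0 := by
  suffices ∀ s : Finset (Fin k), ∃ u : V, u ≠ 0 ∧ ∃ d : Fin k → ℂ,
      (∀ j, φ (Hmat k j) u = d j • u) ∧ ∀ j ∈ s, d j = 0 by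
    obtain ⟨u, hu, d, hud, hd⟩ := this Finset.univ
    exact ⟨u, hu, fun j ↦ by rw [hud, hd j (Finset.mem_univ j), zero_smul]⟩
  intro s
  induction s using Finset.induction_on with
  | empty =>
    have hcomm (i j : Fin k) : Commute (φ (Hmat k i)) (φ (Hmat k j)) := by
      rcases eq_or_ne i j with rfl | hij
      · exact Commute.refl _
      · exact commute_of_lie_eq_zero φ hφ (Hmat_transpose i) (Hmat_transpose j)
          (lie_Hmat_skewSingle_eq_zero (by simp; omega) (by simp; omega))
    obtain ⟨u, hu, d, hud⟩ :=
      Module.End.exists_forall_apply_eq_smul_of_commute (fun j ↦ φ (Hmat k j)) hcomm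
    exact ⟨u, hu, d, hud, by simp⟩
  | insert i s _ ih =>
    obtain ⟨u, hu, d, hud, hd⟩ := ih
    obtain ⟨n, hn⟩ := hint d ⟨u, hu, hud⟩ i
    obtain ⟨w, hw, hwd⟩ := exists_weight_vector_update_eq_zero φ hφ hu hud hn
    refine ⟨w, hw, _, hwd, fun j hj ↦ ?_⟩
    rcases eq_or_ne j i with rfl | hji
    · simp
    · rw [Function.update_of_ne hji]
      exact hd j (by simpa [hji] using hj)

end Cartan

end

theorem stmt13_general (k : ℕ) (V : Type*) [AddCommGroup V] [Module ℂ V]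
    [FiniteDimensional ℂ V] [Nontrivial V]
    (φ : Matrix (Fin (2 * k + 1)) (Fin (2 * k + 1)) ℂ →ₗ[ℂ] Module.End ℂ V)
    -- `φ` restricts to a Lie algebra representation of `so(2k+1,ℂ)`
    (hrep : ∀ A B : Matrix (Fin (2 * k + 1)) (Fin (2 * k + 1)) ℂ,
      Aᵀ = -A → Bᵀ = -B → φ ⁅A, B⁆ = ⁅φ A, φ B⁆)
    -- irreducibility
    (hirr : ∀ W : Submodule ℂ V,
      (∀ A : Matrix (Fin (2 * k + 1)) (Fin (2 * k + 1)) ℂ, Aᵀ = -A →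
        ∀ v ∈ W, φ A v ∈ W) → W = ⊥ ∨ W = ⊤) :
    -- all weights are integral (not of spin type) ↔ 0 is a weight
    (∀ c : Fin k → ℂ, (∃ v : V, v ≠ 0 ∧ ∀ i, φ (Hmat k i) v = c i • v) →
        ∀ i, ∃ n : ℤ, c i = n * I) ↔
      (∃ v : V, v ≠ 0 ∧ ∀ i, φ (Hmat k i) v = 0) := by
  refine ⟨exists_weight_vector_eq_zero_of_integral φ hrep, ?_⟩
  rintro ⟨z, hz, hz0⟩ c ⟨v, hv, hvc⟩ j
  set W := ⨆ μ : AddSubgroup.zmultiples I, (φ (Hmat k j)).maxGenEigenspace μ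
  have hzW : z ∈ W := Submodule.mem_iSup_of_mem 0 <| Module.End.eigenspace_le_maxGenEigenspace <|
    Module.End.mem_eigenspace_iff.mpr (by rw [hz0 j, ZeroMemClass.coe_zero, zero_smul])
  have hW : W = ⊤ :=
    (hirr W fun A hA ↦ mapsTo_iSup_maxGenEigenspace_zmultiples_I φ hrep
      (by simp [Fin.ext_iff]) hA).resolve_left ((Submodule.ne_bot_iff W).mpr ⟨z, hzW, hz⟩)
  obtain ⟨n, hn⟩ := AddSubgroup.mem_zmultiples_iff.mp <|
    Module.End.HasEigenvector.mem_of_mem_iSup_maxGenEigenspace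
      ⟨Module.End.mem_eigenspace_iff.mpr (hvc j), hv⟩ (hW ▸ Submodule.mem_top : v ∈ W)
  exact ⟨n, by rw [← hn, zsmul_eq_mul]⟩

/-- An irreducible (finite-dimensional) representation of
`so(2k+1)` (`k ≥ 1`) factors through `SO(2k+1) = Spin(2k+1)/center`, i.e. is *not* of
spin type — equivalently, all its weights are integral: every simultaneous eigenvalue
system `c` of the Cartan generators `H_i` satisfies `c i ∈ ℤ·i` — if and only if it has
`0` as a weight, i.e. there is a nonzero simultaneous null vector of the `H_i`. -/
theorem stmt13 (k : ℕ) (hk : 1 ≤ k) (V : Type*) [AddCommGroup V] [Module ℂ V]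
    [FiniteDimensional ℂ V] [Nontrivial V]
    (φ : Matrix (Fin (2 * k + 1)) (Fin (2 * k + 1)) ℂ →ₗ[ℂ] Module.End ℂ V)
    -- `φ` restricts to a Lie algebra representation of `so(2k+1,ℂ)`
    (hrep : ∀ A B : Matrix (Fin (2 * k + 1)) (Fin (2 * k + 1)) ℂ,
      Aᵀ = -A → Bᵀ = -B → φ ⁅A, B⁆ = ⁅φ A, φ B⁆)
    -- irreducibility
    (hirr : ∀ W : Submodule ℂ V,
      (∀ A : Matrix (Fin (2 * k + 1)) (Fin (2 * k + 1)) ℂ, Aᵀ = -A →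
        ∀ v ∈ W, φ A v ∈ W) → W = ⊥ ∨ W = ⊤) :
    -- all weights are integral (not of spin type) ↔ 0 is a weight
    (∀ c : Fin k → ℂ, (∃ v : V, v ≠ 0 ∧ ∀ i, φ (Hmat k i) v = c i • v) →
        ∀ i, ∃ n : ℤ, c i = n * I) ↔
      (∃ v : V, v ≠ 0 ∧ ∀ i, φ (Hmat k i) v = 0) :=
  stmt13_general k V φ hrep hirr

end
end

section
/- Let V be a nontrivial irreducible representation of su(m+1) with m ≥ 2, and let X = diag(i,−i,0,…,0) be the torus element. Then X cannot act invertibly on V, i.e., there is no such V on which X annihilates no nonzero weight vector (equivalently, V always has a weight λ with ⟨θ₁−θ₂, λ⟩ = 0). -/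
open scoped Matrix
open Complex

noncomputable section

/-- common eigenvector of commuting endomorphisms -/
lemma auxCE : ∀ (n : ℕ) (V : Type*) [AddCommGroup V] [Module ℂ V] [FiniteDimensional ℂ V]
    [Nontrivial V] (f : Fin n → Module.End ℂ V), (∀ i j, f i * f j = f j * f i) →
    ∃ v : V, v ≠ 0 ∧ ∀ i, ∃ c : ℂ, f i v = c • v := by
  intro n
  induction n with
  | zero =>
    intro V _ _ _ _ f _
    obtain ⟨v, hv⟩ := exists_ne (0 : V)
    exact ⟨v, hv, fun i => i.elim0⟩
  | succ n ih =>
    intro V _ _ _ _ f hcomm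
    obtain ⟨μ, hμ⟩ := Module.End.exists_eigenvalue (f 0)
    set W := Module.End.eigenspace (f 0) μ with hW
    have hmaps : ∀ i, ∀ v ∈ W, f i v ∈ W := by
      intro i v hv
      rw [hW, Module.End.mem_eigenspace_iff] at hv ⊢
      have : f 0 (f i v) = f i (f 0 v) := by
        have := congrArg (fun g : Module.End ℂ V => g v) (hcomm i 0)
        simpa using this.symm
      rw [this, hv, map_smul]
    haveI : Nontrivial W := by
      rcases hμ.exists_hasEigenvector with ⟨v, hv⟩
      exact nontrivial_of_ne ⟨v, hv.1⟩ 0 (by simp [Subtype.ext_iff, hv.2])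
    have hres : ∀ i, Set.MapsTo (f i) W W := fun i v hv => hmaps i v hv
    set F : Fin n → Module.End ℂ W := fun i => (f i.succ).restrict (hres i.succ) with hF
    have hFcomm : ∀ i j, F i * F j = F j * F i := by
      intro i j
      ext ⟨v, hv⟩
      have := congrArg (fun g : Module.End ℂ V => g v) (hcomm i.succ j.succ)
      simp only [hF, Subtype.ext_iff, Module.End.mul_apply, LinearMap.restrict_coe_apply]
      exact this
    obtain ⟨v, hv0, hv⟩ := ih W F hFcomm
    refine ⟨(v : V), by simpa using hv0, ?_⟩
    intro i
    refine Fin.cases ?_ ?_ i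
    · exact ⟨μ, Module.End.mem_eigenspace_iff.mp (hW ▸ v.2)⟩
    · intro j
      obtain ⟨c, hc⟩ := hv j
      refine ⟨c, ?_⟩
      have := congrArg (Subtype.val) hc
      rw [← Submodule.coe_smul, ← hc]; rfl

section auxB
variable {V : Type*} [AddCommGroup V] [Module ℂ V]

lemma auxShift (h e : Module.End ℂ V) (a c : ℂ) (hc : h * e - e * h = a • e) {v : V}
    (hv : h v = c • v) (k : ℕ) : h ((e ^ k) v) = (c + k * a) • (e ^ k) v := by
  induction k with
  | zero => simpa using hv
  | succ k ih =>
    have hmul : h (e ((e ^ k) v)) = e (h ((e ^ k) v)) + a • e ((e ^ k) v) := by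
      have := congrArg (fun g : Module.End ℂ V => g ((e ^ k) v)) hc
      simp only [LinearMap.sub_apply, Module.End.mul_apply, LinearMap.smul_apply] at this
      linear_combination (norm := module) this
    have hpow : (e ^ (k + 1)) v = e ((e ^ k) v) := by
      rw [pow_succ', Module.End.mul_apply]
    rw [hpow, hmul, ih, map_smul]
    push_cast
    module

lemma auxNilp [FiniteDimensional ℂ V] (h e : Module.End ℂ V) (a c : ℂ) (ha : a ≠ 0)
    (hc : h * e - e * h = a • e) {v : V} (hv0 : v ≠ 0) (hv : h v = c • v) :
    ∃ k : ℕ, (e ^ k) v ≠ 0 ∧ e ((e ^ k) v) = 0 := by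
  have hex : ∃ k : ℕ, (e ^ k) v = 0 := by
    by_contra! contra
    have hs : (Set.range fun n : ℕ => c + n * a).Infinite := by
      rw [Set.infinite_range_iff (fun n m hnm => by
        exact_mod_cast mul_right_cancel₀ ha (add_left_cancel hnm))]
      infer_instance
    exact hs (h.eigenvectors_linearIndependent {x | ∃ n : ℕ, c + n * a = x}
      (fun ⟨s, hs⟩ => (e ^ Classical.choose hs) v)
      (fun ⟨r, hr⟩ => by
        refine Module.End.hasEigenvector_iff.mpr ⟨?_, contra _⟩
        rw [Module.End.mem_eigenspace_iff, auxShift h e a c hc hv, Classical.choose_spec hr]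
        )).finite
  obtain ⟨k, hk1, hk2⟩ := Nat.exists_not_and_succ_of_not_zero_of_exists
    (p := fun k => (e ^ k) v = 0) (by simpa using hv0) hex
  exact ⟨k, hk1, by rw [← Module.End.mul_apply, ← pow_succ']; exact hk2⟩

end auxB

section auxC
variable {n : ℕ}

lemma auxDiagStd (d : Fin n → ℂ) (j k : Fin n) (c : ℂ) :
    Matrix.diagonal d * Matrix.single j k c = Matrix.single j k (d j * c) := by
  ext i i'
  rw [Matrix.diagonal_mul]
  simp only [Matrix.single, Matrix.of_apply]
  by_cases h1 : j = i <;> by_cases h2 : k = i' <;> simp [h1, h2]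

lemma auxStdDiag (d : Fin n → ℂ) (j k : Fin n) (c : ℂ) :
    Matrix.single j k c * Matrix.diagonal d = Matrix.single j k (c * d k) := by
  ext i i'
  rw [Matrix.mul_diagonal]
  simp only [Matrix.single, Matrix.of_apply]
  by_cases h1 : j = i <;> by_cases h2 : k = i' <;> simp [h1, h2]

lemma auxStdConjT (j k : Fin n) (c : ℂ) :
    (Matrix.single j k c)ᴴ = Matrix.single k j (starRingEnd ℂ c) := by
  ext i i'
  simp only [Matrix.conjTranspose_apply, Matrix.single, Matrix.of_apply]
  by_cases h1 : j = i' <;> by_cases h2 : k = i <;> simp [h1, h2, and_comm]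

lemma auxDiagOfSingle (j k : Fin n) (hjk : j ≠ k) (z : ℂ) :
    Matrix.diagonal (fun l => (if l = j then z else if l = k then -z else 0)) =
      Matrix.single j j z - Matrix.single k k z := by
  ext i i'
  simp only [Matrix.diagonal, Matrix.sub_apply, Matrix.single, Matrix.of_apply]
  by_cases h1 : i = i'
  · subst h1
    by_cases h2 : i = j <;> by_cases h3 : i = k <;>
      simp_all [eq_comm, sub_eq_iff_eq_add]
  · have hj : ¬(j = i ∧ j = i') := fun ⟨h, h'⟩ => h1 (h ▸ h' ▸ rfl)
    have hk : ¬(k = i ∧ k = i') := fun ⟨h, h'⟩ => h1 (h ▸ h' ▸ rfl)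
    simp [h1, hj, hk]
end auxC

set_option maxHeartbeats 1000000 in
set_option synthInstance.maxHeartbeats 400000 in
/-- Let `V` be a nontrivial irreducible (finite-dimensional complex)
representation of `su(m+1)` with `m ≥ 2`, and let `X = diag(i,-i,0,…,0)`.  Then it
cannot happen that `X` annihilates no nonzero weight vector (weight vectors being the
simultaneous eigenvectors of the diagonal torus of `su(m+1)`); i.e. for `m ≥ 2` no such
`V` exists. -/
theorem stmt15 (m : ℕ) (hm : 2 ≤ m) (V : Type*) [AddCommGroup V] [Module ℂ V]
    [FiniteDimensional ℂ V]
    (φ : Matrix (Fin (m + 1)) (Fin (m + 1)) ℂ →ₗ[ℝ] Module.End ℂ V)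
    -- `φ` restricts to a Lie algebra representation of `su(m+1)`
    (hrep : ∀ A B : Matrix (Fin (m + 1)) (Fin (m + 1)) ℂ,
      Aᴴ = -A → A.trace = 0 → Bᴴ = -B → B.trace = 0 → φ ⁅A, B⁆ = ⁅φ A, φ B⁆)
    -- irreducibility
    (hirr : ∀ W : Submodule ℂ V,
      (∀ A : Matrix (Fin (m + 1)) (Fin (m + 1)) ℂ, Aᴴ = -A → A.trace = 0 →
        ∀ v ∈ W, φ A v ∈ W) → W = ⊥ ∨ W = ⊤)
    -- nontriviality
    (hnt : ∃ A : Matrix (Fin (m + 1)) (Fin (m + 1)) ℂ,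
      Aᴴ = -A ∧ A.trace = 0 ∧ φ A ≠ 0)
    -- `X = diag(i, -i, 0, …, 0)`
    (X : Matrix (Fin (m + 1)) (Fin (m + 1)) ℂ)
    (hX : X = Matrix.diagonal fun l => if l.val = 0 then I else if l.val = 1 then -I else 0)
    -- assume `X` annihilates no nonzero weight vector
    (hweight : ∀ v : V, v ≠ 0 →
      (∀ D : Fin (m + 1) → ℝ, (∑ l, D l) = 0 →
        ∃ c : ℂ, φ (Matrix.diagonal fun l => (D l : ℂ) * I) v = c • v) →
      φ X v ≠ 0) :
    False := by
  classical
  -- distinguished indices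
  set i0 : Fin (m + 1) := ⟨0, by omega⟩ with hi0
  set i1 : Fin (m + 1) := ⟨1, by omega⟩ with hi1
  set i2 : Fin (m + 1) := ⟨2, by omega⟩ with hi2
  have h01 : i0 ≠ i1 := by simp [hi0, hi1, Fin.ext_iff]
  have h12 : i1 ≠ i2 := by simp [hi1, hi2, Fin.ext_iff]
  have h02 : i0 ≠ i2 := by simp [hi0, hi2, Fin.ext_iff]
  -- the diagonal embedding
  set dg : (Fin (m + 1) → ℝ) →ₗ[ℝ] Matrix (Fin (m + 1)) (Fin (m + 1)) ℂ :=
    { toFun := fun D => Matrix.diagonal fun l => (D l : ℂ) * I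
      map_add' := by
        intro D D'
        show Matrix.diagonal _ = Matrix.diagonal _ + Matrix.diagonal _
        ext i j
        rcases eq_or_ne i j with rfl | hij
        · simp only [Matrix.add_apply, Matrix.diagonal_apply_eq, Pi.add_apply]
          push_cast
          ring
        · simp [Matrix.diagonal_apply_ne _ hij]
      map_smul' := by
        intro r D
        show Matrix.diagonal _ = r • Matrix.diagonal _
        ext i j
        rcases eq_or_ne i j with rfl | hij
        · simp only [Matrix.smul_apply, Matrix.diagonal_apply_eq, Pi.smul_apply,
            Complex.real_smul, smul_eq_mul]
          push_cast
          ring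
        · simp [Matrix.diagonal_apply_ne _ hij] } with hdg
  set ψ : (Fin (m + 1) → ℝ) →ₗ[ℝ] Module.End ℂ V := φ ∘ₗ dg with hψ
  have hdgapp : ∀ D : Fin (m + 1) → ℝ, dg D = Matrix.diagonal fun l => (D l : ℂ) * I :=
    fun D => rfl
  have hψapp : ∀ D, ψ D = φ (Matrix.diagonal fun l => (D l : ℂ) * I) := fun D => rfl
  have hrs : ∀ (r : ℝ) (T : Module.End ℂ V), r • T = (r : ℂ) • T := fun r T => by
    rw [← algebraMap_smul ℂ r T, Complex.coe_algebraMap]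
  have hII : ∀ T : Module.End ℂ V, (I * I) • T = (-1 : ℂ) • T := fun T => by
    rw [Complex.I_mul_I]
  -- skewness and trace of diagonal elements
  have hskew : ∀ D : Fin (m + 1) → ℝ, (dg D)ᴴ = -(dg D) := by
    intro D
    rw [hdgapp, Matrix.diagonal_conjTranspose]
    have : (star fun l => (D l : ℂ) * I) = fun l => -((D l : ℂ) * I) := by
      funext l
      simp [Complex.ext_iff]
    rw [this]
    ext i j
    rcases eq_or_ne i j with rfl | hij
    · simp
    · simp [Matrix.diagonal_apply_ne _ hij]
  have htr : ∀ D : Fin (m + 1) → ℝ, (∑ l, D l) = 0 → (dg D).trace = 0 := by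
    intro D hD
    rw [hdgapp, Matrix.trace_diagonal, ← Finset.sum_mul]
    norm_cast
    rw [hD]
    simp
  -- the weight-vector predicate
  set Wt : V → Prop := fun v => ∀ D : Fin (m + 1) → ℝ, (∑ l, D l) = 0 →
      ∃ c : ℂ, ψ D v = c • v with hWt
  have hweight' : ∀ v : V, v ≠ 0 → Wt v → φ X v ≠ 0 := fun v hv hwv => hweight v hv hwv
  -- generators
  set Am : Fin (m + 1) → Fin (m + 1) → Matrix (Fin (m + 1)) (Fin (m + 1)) ℂ := fun j k =>
    Matrix.single j k 1 - Matrix.single k j 1 with hAm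
  set Bm : Fin (m + 1) → Fin (m + 1) → Matrix (Fin (m + 1)) (Fin (m + 1)) ℂ := fun j k =>
    Matrix.single j k I + Matrix.single k j I with hBm
  set Eop : Fin (m + 1) → Fin (m + 1) → Module.End ℂ V := fun j k =>
    (2⁻¹ : ℂ) • φ (Am j k) - (I / 2) • φ (Bm j k) with hEop
  set Dvec : Fin (m + 1) → Fin (m + 1) → (Fin (m + 1) → ℝ) := fun j k l =>
    if l = j then 1 else if l = k then -1 else 0 with hDvec
  set Hop : Fin (m + 1) → Fin (m + 1) → Module.End ℂ V := fun j k =>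
    (-I) • ψ (Dvec j k) with hHop
  have hDvecsum : ∀ j k : Fin (m + 1), j ≠ k → (∑ l, Dvec j k l) = 0 := by
    intro j k hjk
    have : ∀ l, Dvec j k l = (if l = j then (1:ℝ) else 0) + (if l = k then (-1:ℝ) else 0) := by
      intro l
      simp only [hDvec]
      rcases eq_or_ne l j with rfl | hlj
      · simp [hjk]
      · simp [hlj]
    simp only [this, Finset.sum_add_distrib, Finset.sum_ite_eq', Finset.mem_univ, if_true]
    ring
  -- skew-hermitian and traceless
  have hAskew : ∀ j k, (Am j k)ᴴ = -(Am j k) := by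
    intro j k
    simp only [hAm, Matrix.conjTranspose_sub, auxStdConjT, map_one]
    abel
  have hAtr : ∀ j k : Fin (m + 1), j ≠ k → (Am j k).trace = 0 := by
    intro j k hjk
    simp only [hAm, Matrix.trace_sub,
      Matrix.trace_single_eq_of_ne j k (1:ℂ) hjk,
      Matrix.trace_single_eq_of_ne k j (1:ℂ) hjk.symm, sub_zero]
  have hBskew : ∀ j k, (Bm j k)ᴴ = -(Bm j k) := by
    intro j k
    have hs : ∀ a b : Fin (m + 1), Matrix.single a b (-I) = -Matrix.single a b I := by
      intro a b
      have := Matrix.smul_single (-1 : ℂ) a b I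
      simpa [neg_smul, one_smul] using this.symm
    simp only [hBm, Matrix.conjTranspose_add, auxStdConjT, map_neg,
      Complex.conj_I, hs]
    abel
  have hBtr : ∀ j k : Fin (m + 1), j ≠ k → (Bm j k).trace = 0 := by
    intro j k hjk
    simp only [hBm, Matrix.trace_add,
      Matrix.trace_single_eq_of_ne j k I hjk,
      Matrix.trace_single_eq_of_ne k j I hjk.symm, add_zero]
  -- matrix commutators
  have hDA : ∀ (D : Fin (m + 1) → ℝ) (j k : Fin (m + 1)), j ≠ k →
      dg D * Am j k - Am j k * dg D = (D j - D k) • Bm j k := by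
    intro D j k hjk
    simp only [hAm, hBm]
    rw [hdgapp, mul_sub, sub_mul, auxDiagStd, auxDiagStd, auxStdDiag, auxStdDiag, smul_add,
      Matrix.smul_single, Matrix.smul_single]
    ext p q
    simp only [Matrix.sub_apply, Matrix.add_apply, Matrix.single, Matrix.of_apply]
    by_cases hc1 : j = p ∧ k = q
    · obtain ⟨rfl, rfl⟩ := hc1
      have hc2 : ¬(k = j ∧ j = k) := fun hc => hjk hc.1.symm
      simp only [hc2, if_false, and_self, if_true, Complex.real_smul]
      push_cast
      ring
    · by_cases hc2 : k = p ∧ j = q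
      · obtain ⟨rfl, rfl⟩ := hc2
        have hc1' : ¬(j = k ∧ k = j) := fun hc => hjk hc.1
        simp only [hc1', if_false, and_self, if_true, Complex.real_smul]
        push_cast
        ring
      · simp [hc1, hc2]
  have hDB : ∀ (D : Fin (m + 1) → ℝ) (j k : Fin (m + 1)), j ≠ k →
      dg D * Bm j k - Bm j k * dg D = -((D j - D k) • Am j k) := by
    intro D j k hjk
    simp only [hAm, hBm]
    rw [hdgapp, mul_add, add_mul, auxDiagStd, auxDiagStd, auxStdDiag, auxStdDiag, smul_sub,
      Matrix.smul_single, Matrix.smul_single]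
    ext p q
    simp only [Matrix.sub_apply, Matrix.add_apply, Matrix.neg_apply, Matrix.single,
      Matrix.of_apply]
    by_cases hc1 : j = p ∧ k = q
    · obtain ⟨rfl, rfl⟩ := hc1
      have hc2 : ¬(k = j ∧ j = k) := fun hc => hjk hc.1.symm
      simp only [hc2, if_false, and_self, if_true, Complex.real_smul]
      push_cast
      linear_combination ((D j : ℂ) - (D k : ℂ)) * Complex.I_sq
    · by_cases hc2 : k = p ∧ j = q
      · obtain ⟨rfl, rfl⟩ := hc2
        have hc1' : ¬(j = k ∧ k = j) := fun hc => hjk hc.1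
        simp only [hc1', if_false, and_self, if_true, Complex.real_smul]
        push_cast
        linear_combination ((D k : ℂ) - (D j : ℂ)) * Complex.I_sq
      · simp [hc1, hc2]
  have hAB : ∀ (j k : Fin (m + 1)), j ≠ k →
      Am j k * Bm j k - Bm j k * Am j k = (2 : ℝ) • dg (Dvec j k) := by
    intro j k hjk
    have hd : dg (Dvec j k) = Matrix.single j j I - Matrix.single k k I := by
      have hfun : (fun l => ((Dvec j k l : ℝ) : ℂ) * I) =
          (fun l => if l = j then I else if l = k then -I else 0) := by
        funext l
        simp only [hDvec]
        split_ifs <;> push_cast <;> ring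
      rw [hdgapp, hfun, auxDiagOfSingle j k hjk I]
    rw [hd]
    simp only [hAm, hBm]
    rw [sub_mul, add_mul, mul_add, mul_add, mul_sub, mul_sub,
      Matrix.single_mul_single_of_ne (c := (1 : ℂ)) (i := j) (j := k) (k := j) (h := hjk.symm) (d := I),
      Matrix.single_mul_single_of_ne (c := (1 : ℂ)) (i := k) (j := j) (k := k) (h := hjk) (d := I),
      Matrix.single_mul_single_of_ne (c := I) (i := j) (j := k) (k := j) (h := hjk.symm) (d := (1 : ℂ)),
      Matrix.single_mul_single_of_ne (c := I) (i := k) (j := j) (k := k) (h := hjk) (d := (1 : ℂ)),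
      Matrix.single_mul_single_same (c := (1 : ℂ)) (i := j) (j := k) (k := j) (d := I),
      Matrix.single_mul_single_same (c := (1 : ℂ)) (i := k) (j := j) (k := k) (d := I),
      Matrix.single_mul_single_same (c := I) (i := j) (j := k) (k := j) (d := (1 : ℂ)),
      Matrix.single_mul_single_same (c := I) (i := k) (j := j) (k := k) (d := (1 : ℂ)), smul_sub,
      Matrix.smul_single, Matrix.smul_single]
    ext p q
    simp only [Matrix.sub_apply, Matrix.add_apply, Matrix.zero_apply, Matrix.single,
      Matrix.of_apply]
    by_cases hc1 : j = p ∧ j = q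
    · obtain ⟨rfl, rfl⟩ := hc1
      have hc2 : ¬(k = j ∧ k = j) := fun hc => hjk hc.1.symm
      simp only [hc2, if_false, and_self, if_true, Complex.real_smul]
      push_cast
      ring
    · by_cases hc2 : k = p ∧ k = q
      · obtain ⟨rfl, rfl⟩ := hc2
        have hc1' : ¬(j = k ∧ j = k) := fun hc => hjk hc.1
        simp only [hc1', if_false, and_self, if_true, Complex.real_smul]
        push_cast
        ring
      · simp [hc1, hc2]
  -- operator commutators
  have hcommE : ∀ (D : Fin (m + 1) → ℝ), (∑ l, D l) = 0 → ∀ (j k : Fin (m + 1)), j ≠ k →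
      ψ D * Eop j k - Eop j k * ψ D = (((D j - D k : ℝ) : ℂ) * I) • Eop j k := by
    intro D hD j k hjk
    have hfold : φ (dg D) = ψ D := rfl
    have e1 := hrep (dg D) (Am j k) (hskew D) (htr D hD) (hAskew j k) (hAtr j k hjk)
    rw [Ring.lie_def, Ring.lie_def, hDA D j k hjk, map_smul, hrs, hfold] at e1
    have e2 := hrep (dg D) (Bm j k) (hskew D) (htr D hD) (hBskew j k) (hBtr j k hjk)
    rw [Ring.lie_def, Ring.lie_def, hDB D j k hjk, map_neg, map_smul, hrs, hfold] at e2
    simp only [hEop, mul_sub, sub_mul, smul_mul_assoc, mul_smul_comm, smul_sub, smul_smul]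
    linear_combination (norm := module) (2⁻¹ : ℂ) • e1.symm - (I / 2) • e2.symm
      + (((D j - D k : ℝ) : ℂ) / 2) • hII (φ (Bm j k))
  have hEFop : ∀ (j k : Fin (m + 1)), j ≠ k →
      Eop j k * Eop k j - Eop k j * Eop j k = Hop j k := by
    intro j k hjk
    have hAkj : φ (Am k j) = -φ (Am j k) := by
      rw [show Am k j = -(Am j k) from by simp only [hAm]; exact (neg_sub _ _).symm, map_neg]
    have hBkj : φ (Bm k j) = φ (Bm j k) := by
      rw [show Bm k j = Bm j k from by simp only [hBm]; exact add_comm _ _]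
    have e3 := hrep (Am j k) (Bm j k) (hAskew j k) (hAtr j k hjk) (hBskew j k) (hBtr j k hjk)
    rw [Ring.lie_def, Ring.lie_def, hAB j k hjk, map_smul, hrs] at e3
    have hfold : φ (dg (Dvec j k)) = ψ (Dvec j k) := rfl
    rw [hfold] at e3
    push_cast at e3
    simp only [hEop, hHop, hAkj, hBkj, mul_sub, sub_mul, mul_add, add_mul, smul_mul_assoc,
      mul_smul_comm, smul_sub, smul_add, smul_smul, neg_mul, mul_neg, neg_smul, smul_neg]
    linear_combination (norm := module) (-(I / 2)) • e3.symm
  have hψψ : ∀ D D' : Fin (m + 1) → ℝ, (∑ l, D l) = 0 → (∑ l, D' l) = 0 →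
      ψ D * ψ D' = ψ D' * ψ D := by
    intro D D' hD hD'
    have hfold : ∀ E, φ (dg E) = ψ E := fun _ => rfl
    have hcm : dg D * dg D' = dg D' * dg D := by
      rw [hdgapp, hdgapp, Matrix.diagonal_mul_diagonal, Matrix.diagonal_mul_diagonal]
      exact congrArg Matrix.diagonal (funext fun l => by ring)
    have e4 := hrep (dg D) (dg D') (hskew D) (htr D hD) (hskew D') (htr D' hD')
    rw [Ring.lie_def, Ring.lie_def, hfold, hfold] at e4
    rw [hcm, sub_self, map_zero] at e4
    exact sub_eq_zero.mp e4.symm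
  -- nontriviality of V
  obtain ⟨A₀, hA₀s, hA₀t, hA₀n⟩ := hnt
  obtain ⟨x₀, hx₀⟩ := DFunLike.ne_iff.mp hA₀n
  haveI : Nontrivial V := nontrivial_of_ne (φ A₀ x₀) 0 (by simpa using hx₀)
  -- common eigenvector for the torus
  set Ff : Fin (m + 1) → (Fin (m + 1) → ℝ) :=
    fun j l => (if l = j then 1 else 0) - 1 / (m + 1) with hFf
  have hFfsum : ∀ j, (∑ l, Ff j l) = 0 := by
    intro j
    simp only [hFf, Finset.sum_sub_distrib, Finset.sum_ite_eq', Finset.mem_univ, if_true,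
      Finset.sum_const, Finset.card_univ, Fintype.card_fin, nsmul_eq_mul]
    push_cast
    field_simp
    norm_num
  obtain ⟨v₀, hv₀ne, hv₀⟩ := auxCE (m + 1) V (fun j => ψ (Ff j))
    (fun i j => hψψ _ _ (hFfsum i) (hFfsum j))
  choose μ₀ hμ₀ using hv₀
  have hWt₀ : Wt v₀ := by
    intro D hD
    have hDdec : D = ∑ j, D j • Ff j := by
      funext l
      simp only [Finset.sum_apply, Pi.smul_apply, hFf, smul_eq_mul, mul_sub,
        Finset.sum_sub_distrib, mul_ite, mul_one, mul_zero, Finset.sum_ite_eq',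
        Finset.mem_univ, if_true]
      rw [← Finset.sum_mul, hD, Finset.sum_ite_eq]
      simp
    refine ⟨∑ j, (D j : ℂ) * μ₀ j, ?_⟩
    have hψsum : ψ D = ∑ j, D j • ψ (Ff j) := by
      conv_lhs => rw [hDdec]
      rw [map_sum]
      simp only [map_smul]
    rw [hψsum, LinearMap.sum_apply, Finset.sum_smul]
    refine Finset.sum_congr rfl fun j _ => ?_
    rw [LinearMap.smul_apply, hμ₀ j, ← Complex.real_smul, smul_assoc]
  -- the distinguished sl2 triple
  have hhe : Hop i0 i1 * Eop i0 i1 - Eop i0 i1 * Hop i0 i1 = (2 : ℂ) • Eop i0 i1 := by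
    have h1 := hcommE (Dvec i0 i1) (hDvecsum _ _ h01) i0 i1 h01
    have hco : ((Dvec i0 i1 i0 - Dvec i0 i1 i1 : ℝ) : ℂ) = 2 := by
      simp only [hDvec, if_pos rfl, if_neg h01.symm]
      norm_num
    simp only [hHop]
    rw [smul_mul_assoc, mul_smul_comm, ← smul_sub, h1, hco, smul_smul]
    congr 1
    linear_combination (-2 : ℂ) * Complex.I_sq
  have hhf : Hop i0 i1 * Eop i1 i0 - Eop i1 i0 * Hop i0 i1 = (-2 : ℂ) • Eop i1 i0 := by
    have h1 := hcommE (Dvec i0 i1) (hDvecsum _ _ h01) i1 i0 h01.symm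
    have hco : ((Dvec i0 i1 i1 - Dvec i0 i1 i0 : ℝ) : ℂ) = -2 := by
      simp only [hDvec, if_pos rfl, if_neg h01.symm]
      norm_num
    simp only [hHop]
    rw [smul_mul_assoc, mul_smul_comm, ← smul_sub, h1, hco, smul_smul]
    congr 1
    linear_combination (2 : ℂ) * Complex.I_sq
  have hef : Eop i0 i1 * Eop i1 i0 - Eop i1 i0 * Eop i0 i1 = Hop i0 i1 := hEFop i0 i1 h01
  -- φ X in terms of the triple
  have hXψ : φ X = ψ (Dvec i0 i1) := by
    have hfun : ∀ l : Fin (m + 1), ((Dvec i0 i1 l : ℝ) : ℂ) * I =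
        if l.val = 0 then I else if l.val = 1 then -I else 0 := by
      intro l
      simp only [hDvec]
      rcases eq_or_ne l i0 with rfl | hl0
      · simp only [if_pos rfl, hi0]
        push_cast
        ring
      · have hv0 : ¬(l.val = 0) := fun hc => hl0 (Fin.ext (by simp [hi0, hc]))
        rcases eq_or_ne l i1 with rfl | hl1
        · simp only [if_neg hl0, if_pos rfl, if_neg hv0, if_pos (show i1.val = 1 from rfl)]
          push_cast
          ring
        · have hv1 : ¬(l.val = 1) := fun hc => hl1 (Fin.ext (by simp [hi1, hc]))
          simp only [if_neg hl0, if_neg hl1, if_neg hv0, if_neg hv1]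
          push_cast
          ring
    rw [hX, hψapp]
    exact congrArg φ (congrArg Matrix.diagonal (funext fun l => (hfun l).symm))
  have hXh : φ X = I • Hop i0 i1 := by
    rw [hXψ]
    simp only [hHop]
    rw [smul_smul]
    have : I * -I = 1 := by
      rw [mul_neg, Complex.I_mul_I, neg_neg]
    rw [this, one_smul]
  -- weight preservation
  have hWtE : ∀ (j k : Fin (m + 1)), j ≠ k → ∀ v : V, Wt v → Wt (Eop j k v) := by
    intro j k hjk v hv D hD
    obtain ⟨c, hc⟩ := hv D hD
    refine ⟨c + ((D j - D k : ℝ) : ℂ) * I, ?_⟩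
    have h1 := congrArg (fun g : Module.End ℂ V => g v) (hcommE D hD j k hjk)
    simp only [LinearMap.sub_apply, Module.End.mul_apply, LinearMap.smul_apply] at h1
    have h2 : Eop j k (ψ D v) = c • Eop j k v := by rw [hc, map_smul]
    linear_combination (norm := module) h1 + h2
  have hWtpow : ∀ (j k : Fin (m + 1)), j ≠ k → ∀ (n : ℕ) (v : V), Wt v →
      Wt ((Eop j k ^ n) v) := by
    intro j k hjk n
    induction n with
    | zero => intro v hv; simpa using hv
    | succ n ih =>
      intro v hv
      rw [pow_succ', Module.End.mul_apply]
      exact hWtE j k hjk _ (ih v hv)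
  have hgetc : ∀ v : V, Wt v → ∃ c : ℂ, Hop i0 i1 v = c • v := by
    intro v hv
    obtain ⟨c, hc⟩ := hv (Dvec i0 i1) (hDvecsum _ _ h01)
    refine ⟨-I * c, ?_⟩
    simp only [hHop]
    rw [LinearMap.smul_apply, hc, smul_smul]
  -- the triple is nonzero
  have hEne : Hop i0 i1 ≠ 0 := by
    intro h0
    apply hweight' v₀ hv₀ne hWt₀
    rw [hXh, h0, smul_zero]
    simp
  -- the key sl2 step
  letI : LieRing (Module.End ℂ V) := LieRing.ofAssociativeRing
  have htoEnd : LieModule.toEnd ℂ (Module.End ℂ V) V (Eop i1 i0) = Eop i1 i0 := by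
    ext u
    simp [LieModule.toEnd_apply_apply]
  have key : ∀ v : V, v ≠ 0 → Wt v → ∀ c : ℂ, Hop i0 i1 v = c • v →
      ∃ (w : V) (n : ℕ) (k : ℕ), w ≠ 0 ∧ Wt w ∧ Hop i0 i1 w = (n : ℂ) • w ∧
        (c + 2 * k = (n : ℂ)) ∧ (Even n → False) := by
    intro v hv0 hvW c hvc
    obtain ⟨k, hk0, hk1⟩ := auxNilp (Hop i0 i1) (Eop i0 i1) 2 c two_ne_zero hhe hv0 hvc
    have hwWt : Wt ((Eop i0 i1 ^ k) v) := hWtpow i0 i1 h01 k v hvW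
    have hwh : Hop i0 i1 ((Eop i0 i1 ^ k) v) = (c + k * 2) • (Eop i0 i1 ^ k) v :=
      auxShift (Hop i0 i1) (Eop i0 i1) 2 c hhe hvc k
    have t : IsSl2Triple (Hop i0 i1) (Eop i0 i1) (Eop i1 i0) :=
      { h_ne_zero := hEne
        lie_e_f := by rw [Ring.lie_def, hef]
        lie_h_e_nsmul := by
          rw [Ring.lie_def, hhe, ← Nat.cast_smul_eq_nsmul ℂ 2 (Eop i0 i1)]
          norm_num
        lie_h_f_nsmul := by
          rw [Ring.lie_def, hhf, ← Nat.cast_smul_eq_nsmul ℂ 2 (Eop i1 i0)]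
          push_cast
          rw [neg_smul]
      }
    have P : t.HasPrimitiveVectorWith ((Eop i0 i1 ^ k) v) (c + k * 2) :=
      { ne_zero := hk0
        lie_h := by rw [Module.End.lie_apply]; exact hwh
        lie_e := by rw [Module.End.lie_apply]; exact hk1 }
    obtain ⟨n, hn⟩ := P.exists_nat
    refine ⟨(Eop i0 i1 ^ k) v, n, k, hk0, hwWt, by rw [hwh, hn], by rw [← hn]; ring, ?_⟩
    intro hEven
    obtain ⟨q, hq⟩ := hEven
    have hq2 : n = 2 * q := by omega
    have hw'0 : (Eop i1 i0 ^ q) ((Eop i0 i1 ^ k) v) ≠ 0 := by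
      have := P.pow_toEnd_f_ne_zero_of_eq_nat hn (by omega : q ≤ n)
      rwa [htoEnd] at this
    have hw'h : Hop i0 i1 ((Eop i1 i0 ^ q) ((Eop i0 i1 ^ k) v)) = 0 := by
      have h3 := P.lie_h_pow_toEnd_f q
      rw [htoEnd, Module.End.lie_apply] at h3
      rw [h3, hn, hq2]
      have : ((2 * q : ℕ) : ℂ) - 2 * (q : ℕ) = 0 := by push_cast; ring
      rw [this, zero_smul]
    have hw'W : Wt ((Eop i1 i0 ^ q) ((Eop i0 i1 ^ k) v)) :=
      hWtpow i1 i0 h01.symm q _ hwWt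
    apply hweight' _ hw'0 hw'W
    rw [hXh, LinearMap.smul_apply, hw'h, smul_zero]
  -- run the argument
  obtain ⟨c₀, hc₀⟩ := hgetc v₀ hWt₀
  obtain ⟨w₀, n₀, k₀, hw₀ne, hw₀W, hw₀h, hlink₀, hcontra₀⟩ := key v₀ hv₀ne hWt₀ c₀ hc₀
  by_cases hpar : Even n₀
  · exact hcontra₀ hpar
  -- n₀ odd: move by a ±1 shift to an even eigenvalue
  have hodd : Odd n₀ := Nat.odd_iff.mpr (Nat.not_even_iff.mp hpar)
  have step : ∀ (j k : Fin (m + 1)), j ≠ k → ∀ s : ℤ,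
      ((Dvec i0 i1 j - Dvec i0 i1 k : ℝ) : ℂ) = (s : ℂ) → Odd s → Eop j k w₀ ≠ 0 → False := by
    intro j k hjk s hs hsodd hne
    have hcm : Hop i0 i1 * Eop j k - Eop j k * Hop i0 i1 = (s : ℂ) • Eop j k := by
      have h1 := hcommE (Dvec i0 i1) (hDvecsum _ _ h01) j k hjk
      simp only [hHop]
      rw [smul_mul_assoc, mul_smul_comm, ← smul_sub, h1, hs, smul_smul]
      congr 1
      linear_combination (-(s : ℂ)) * Complex.I_sq
    have hveig : Hop i0 i1 (Eop j k w₀) = ((n₀ : ℂ) + s) • Eop j k w₀ := by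
      have h1 := congrArg (fun g : Module.End ℂ V => g w₀) hcm
      simp only [LinearMap.sub_apply, Module.End.mul_apply, LinearMap.smul_apply] at h1
      have h2 : Eop j k (Hop i0 i1 w₀) = (n₀ : ℂ) • Eop j k w₀ := by rw [hw₀h, map_smul]
      linear_combination (norm := module) h1 + h2
    have hW1 : Wt (Eop j k w₀) := hWtE j k hjk w₀ hw₀W
    obtain ⟨w₁, n₁, k₁, hw₁ne, hw₁W, hw₁h, hlink₁, hcontra₁⟩ :=
      key (Eop j k w₀) hne hW1 _ hveig
    apply hcontra₁
    have hz : (n₀ : ℤ) + s + 2 * (k₁ : ℤ) = (n₁ : ℤ) := by exact_mod_cast hlink₁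
    obtain ⟨a, ha⟩ := hsodd
    obtain ⟨b, hb⟩ := hodd
    have : Even (n₁ : ℤ) := ⟨a + b + 1 + k₁, by omega⟩
    exact Int.even_coe_nat n₁ |>.mp this
  -- the four candidate shifts
  by_cases c12 : Eop i1 i2 w₀ = 0
  · by_cases c21 : Eop i2 i1 w₀ = 0
    · by_cases c02 : Eop i0 i2 w₀ = 0
      · by_cases c20 : Eop i2 i0 w₀ = 0
        · -- all four vanish: Hop i0 i1 kills w₀, so n₀ = 0, contradicting oddness
          have hh12 : Hop i1 i2 w₀ = 0 := by
            rw [← hEFop i1 i2 h12]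
            simp only [LinearMap.sub_apply, Module.End.mul_apply]
            rw [c21, c12, map_zero, map_zero, sub_zero]
          have hh02 : Hop i0 i2 w₀ = 0 := by
            rw [← hEFop i0 i2 h02]
            simp only [LinearMap.sub_apply, Module.End.mul_apply]
            rw [c20, c02, map_zero, map_zero, sub_zero]
          have hDeq : Dvec i0 i1 = Dvec i0 i2 - Dvec i1 i2 := by
            funext l
            simp only [hDvec, Pi.sub_apply]
            rcases eq_or_ne l i0 with rfl | hl0
            · simp [if_neg h01, if_neg h02]
            · rcases eq_or_ne l i1 with rfl | hl1
              · simp [if_neg hl0, if_neg h12]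
              · rcases eq_or_ne l i2 with rfl | hl2
                · simp [if_neg hl0, if_neg hl1, if_neg (h12.symm)]
                · simp [if_neg hl0, if_neg hl1, if_neg hl2]
          have hkill : Hop i0 i1 w₀ = 0 := by
            have hsplit : Hop i0 i1 = Hop i0 i2 - Hop i1 i2 := by
              simp only [hHop]
              rw [hDeq, map_sub, smul_sub]
            rw [hsplit, LinearMap.sub_apply, hh02, hh12, sub_zero]
          rw [hw₀h] at hkill
          rcases smul_eq_zero.mp hkill with hc | hw
          · have : n₀ = 0 := by exact_mod_cast hc
            exact hpar (by simp [this])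
          · exact hw₀ne hw
        · refine step i2 i0 h02.symm (-1) ?_ (by decide) c20
          simp only [hDvec, if_neg (h02.symm), if_neg (h12.symm), if_pos rfl]
          norm_num
      · refine step i0 i2 h02 1 ?_ (by decide) c02
        simp only [hDvec, if_pos rfl, if_neg (h02.symm), if_neg (h12.symm)]
        norm_num
    · refine step i2 i1 h12.symm 1 ?_ (by decide) c21
      simp only [hDvec, if_neg (h02.symm), if_neg (h12.symm), if_neg h01.symm, if_pos rfl]
      norm_num
  · refine step i1 i2 h12 (-1) ?_ (by decide) c12
    simp only [hDvec, if_neg h01.symm, if_pos rfl, if_neg (h02.symm), if_neg (h12.symm)]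
    norm_num

end
end

section
/- In su(p+4) with p ≥ 2, choose a complex orthonormal basis {e₁,e₂,f₁,f₂,g₁,…,g_p} such that su(4) is the stabilizer of span(g_r) and sp(2) ⊂ su(4) stabilizes the quaternionic structure J with Je_i = (−1)^{i+1}e_{i+1}, Jf_i = (−1)^{i+1}f_{i+1} (indices mod 2). Then g' := su(3) ⊕ su(3) ⊂ stab(span(e₁,f₁,g₁)) ⊕ stab(span(e₂,f₂,g₂)) satisfies su(4) ∩ g' = su(2) ⊕ su(2) and sp(2) ∩ g' = Δsu(2). -/
open scoped Matrix
open Complex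

noncomputable section

variable (p : ℕ)

/-- Membership in `su(p+4)`: traceless skew-Hermitian matrices.  We use the complex
orthonormal basis `{e₁, e₂, f₁, f₂, g₁, …, g_p}` of `ℂ^{p+4}`, indexed so that
`e₁ = 0`, `e₂ = 1`, `f₁ = 2`, `f₂ = 3`, `g₁ = 4`, `g₂ = 5`, …. -/
def suMem (A : Matrix (Fin (p + 4)) (Fin (p + 4)) ℂ) : Prop :=
  Aᴴ = -A ∧ A.trace = 0

/-- `su(4) ⊂ su(p+4)`: the stabilizer of `span(g_r)`, i.e. the matrices supported on
the span of `e₁, e₂, f₁, f₂` (indices `< 4`). -/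
def su4Mem (A : Matrix (Fin (p + 4)) (Fin (p + 4)) ℂ) : Prop :=
  suMem p A ∧ ∀ i j : Fin (p + 4), 4 ≤ i.val ∨ 4 ≤ j.val → A i j = 0

/-- The quaternionic structure `J` on `span(e_i, f_i)`: the antilinear map with
`J e_i = (-1)^{i+1} e_{i+1}` and `J f_i = (-1)^{i+1} f_{i+1}` (indices mod 2),
extended by `0`. -/
def Jmap (x : Fin (p + 4) → ℂ) : Fin (p + 4) → ℂ := fun n =>
  if n.val = 0 then -(starRingEnd ℂ) (x 1)
  else if n.val = 1 then (starRingEnd ℂ) (x 0)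
  else if n.val = 2 then -(starRingEnd ℂ) (x 3)
  else if n.val = 3 then (starRingEnd ℂ) (x 2)
  else 0

/-- `sp(2) ⊂ su(4)`: the stabilizer of the quaternionic structure `J`. -/
def sp2Mem (A : Matrix (Fin (p + 4)) (Fin (p + 4)) ℂ) : Prop :=
  su4Mem p A ∧ ∀ x : Fin (p + 4) → ℂ, A.mulVec (Jmap p x) = Jmap p (A.mulVec x)

/-- `g' = su(3) ⊕ su(3) ⊂ stab(span(e₁,f₁,g₁)) ⊕ stab(span(e₂,f₂,g₂))`:  matrices in
`su(p+4)` supported on the two blocks `{e₁,f₁,g₁}` (indices `{0,2,4}`) and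
`{e₂,f₂,g₂}` (indices `{1,3,5}`), with each `3×3` block traceless. -/
def g'Mem (A : Matrix (Fin (p + 4)) (Fin (p + 4)) ℂ) : Prop :=
  suMem p A ∧
  (∀ i j : Fin (p + 4), A i j ≠ 0 →
    (i.val ∈ ({0, 2, 4} : Set ℕ) ∧ j.val ∈ ({0, 2, 4} : Set ℕ)) ∨
    (i.val ∈ ({1, 3, 5} : Set ℕ) ∧ j.val ∈ ({1, 3, 5} : Set ℕ))) ∧
  A 0 0 + A 2 2 + A 4 4 = 0 ∧ A 1 1 + A 3 3 + A 5 5 = 0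

/-- `su(2) ⊕ su(2)`:  matrices in `su(p+4)` supported on the blocks `{e₁,f₁}`
(indices `{0,2}`) and `{e₂,f₂}` (indices `{1,3}`), each `2×2` block traceless. -/
def su2su2Mem (A : Matrix (Fin (p + 4)) (Fin (p + 4)) ℂ) : Prop :=
  suMem p A ∧
  (∀ i j : Fin (p + 4), A i j ≠ 0 →
    (i.val ∈ ({0, 2} : Set ℕ) ∧ j.val ∈ ({0, 2} : Set ℕ)) ∨
    (i.val ∈ ({1, 3} : Set ℕ) ∧ j.val ∈ ({1, 3} : Set ℕ))) ∧
  A 0 0 + A 2 2 = 0 ∧ A 1 1 + A 3 3 = 0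

/-- `Δsu(2) ⊂ su(2) ⊕ su(2)`:  the diagonal with respect to the identification of the
two `su(2)`-blocks induced by `J` (the second block is the entrywise conjugate of the
first). -/
def diagSU2Mem (A : Matrix (Fin (p + 4)) (Fin (p + 4)) ℂ) : Prop :=
  su2su2Mem p A ∧
  A 1 1 = (starRingEnd ℂ) (A 0 0) ∧ A 1 3 = (starRingEnd ℂ) (A 0 2) ∧
  A 3 1 = (starRingEnd ℂ) (A 2 0) ∧ A 3 3 = (starRingEnd ℂ) (A 2 2)

section Aux
variable {p : ℕ}

lemma V0 : ((0 : Fin (p+4)) : ℕ) = 0 := rfl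
lemma V1 : ((1 : Fin (p+4)) : ℕ) = 1 := by
  show 1 % (p+4) = 1; exact Nat.mod_eq_of_lt (by omega)
lemma V2 : ((2 : Fin (p+4)) : ℕ) = 2 := by
  show 2 % (p+4) = 2; exact Nat.mod_eq_of_lt (by omega)
lemma V3 : ((3 : Fin (p+4)) : ℕ) = 3 := by
  show 3 % (p+4) = 3; exact Nat.mod_eq_of_lt (by omega)
lemma V4 (hp : 2 ≤ p) : ((4 : Fin (p+4)) : ℕ) = 4 := by
  show 4 % (p+4) = 4; exact Nat.mod_eq_of_lt (by omega)
lemma V5 (hp : 2 ≤ p) : ((5 : Fin (p+4)) : ℕ) = 5 := by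
  show 5 % (p+4) = 5
  exact Nat.mod_eq_of_lt (by omega)

lemma row_expand (A : Matrix (Fin (p+4)) (Fin (p+4)) ℂ) (i : Fin (p+4))
    (h : ∀ j : Fin (p+4), 4 ≤ j.val → A i j = 0) (v : Fin (p+4) → ℂ) :
    A.mulVec v i = A i 0 * v 0 + A i 1 * v 1 + A i 2 * v 2 + A i 3 * v 3 := by
  have hsub : ({0,1,2,3} : Finset (Fin (p+4))) ⊆ Finset.univ := Finset.subset_univ _
  have key : ∑ j ∈ ({0,1,2,3} : Finset (Fin (p+4))), A i j * v j
      = ∑ j : Fin (p+4), A i j * v j := by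
    refine Finset.sum_subset hsub ?_
    intro j _ hj
    simp only [Finset.mem_insert, Finset.mem_singleton] at hj
    push_neg at hj
    obtain ⟨h0, h1, h2, h3⟩ := hj
    have : 4 ≤ j.val := by
      by_contra hlt
      push_neg at hlt
      interval_cases hv : j.val
      · exact h0 (Fin.ext (by rw [V0]; exact hv))
      · exact h1 (Fin.ext (by rw [V1]; exact hv))
      · exact h2 (Fin.ext (by rw [V2]; exact hv))
      · exact h3 (Fin.ext (by rw [V3]; exact hv))
    rw [h j this, zero_mul]
  rw [Matrix.mulVec, dotProduct, ← key]
  have d01 : (0 : Fin (p+4)) ≠ 1 := Fin.ne_of_val_ne (by rw [V0, V1]; omega)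
  have d02 : (0 : Fin (p+4)) ≠ 2 := Fin.ne_of_val_ne (by rw [V0, V2]; omega)
  have d03 : (0 : Fin (p+4)) ≠ 3 := Fin.ne_of_val_ne (by rw [V0, V3]; omega)
  have d12 : (1 : Fin (p+4)) ≠ 2 := Fin.ne_of_val_ne (by rw [V1, V2]; omega)
  have d13 : (1 : Fin (p+4)) ≠ 3 := Fin.ne_of_val_ne (by rw [V1, V3]; omega)
  have d23 : (2 : Fin (p+4)) ≠ 3 := Fin.ne_of_val_ne (by rw [V2, V3]; omega)
  rw [Finset.sum_insert (by simp [d01, d02, d03]),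
    Finset.sum_insert (by simp [d12, d13]),
    Finset.sum_insert (by simp [d23]), Finset.sum_singleton]
  ring

end Aux

section Aux2
variable {p : ℕ}

lemma J0e (x : Fin (p+4) → ℂ) : Jmap p x 0 = -(starRingEnd ℂ) (x 1) := by
  simp only [Jmap]; rw [if_pos V0]

lemma J1e (x : Fin (p+4) → ℂ) : Jmap p x 1 = (starRingEnd ℂ) (x 0) := by
  simp only [Jmap]; rw [if_neg (by rw [V1]; omega), if_pos V1]

lemma J2e (x : Fin (p+4) → ℂ) : Jmap p x 2 = -(starRingEnd ℂ) (x 3) := by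
  simp only [Jmap]
  rw [if_neg (by rw [V2]; omega), if_neg (by rw [V2]; omega), if_pos V2]

lemma J3e (x : Fin (p+4) → ℂ) : Jmap p x 3 = (starRingEnd ℂ) (x 2) := by
  simp only [Jmap]
  rw [if_neg (by rw [V3]; omega), if_neg (by rw [V3]; omega),
    if_neg (by rw [V3]; omega), if_pos V3]

lemma Jhe (x : Fin (p+4) → ℂ) (n : Fin (p+4)) (h : 4 ≤ n.val) : Jmap p x n = 0 := by
  simp only [Jmap]
  rw [if_neg (by omega), if_neg (by omega), if_neg (by omega), if_neg (by omega)]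

lemma part1 (hp : 2 ≤ p) (A : Matrix (Fin (p+4)) (Fin (p+4)) ℂ) :
    (su4Mem p A ∧ g'Mem p A) ↔ su2su2Mem p A := by
  constructor
  · rintro ⟨⟨hsu, hz⟩, _, hsupp, ht1, ht2⟩
    have hA44 : A 4 4 = 0 := hz 4 4 (Or.inl (by rw [V4 hp]))
    have hA55 : A 5 5 = 0 := hz 5 5 (Or.inl (by rw [V5 hp]; omega))
    refine ⟨hsu, ?_, by linear_combination ht1 - hA44, by linear_combination ht2 - hA55⟩
    intro i j hne
    rcases hsupp i j hne with ⟨hi, hj⟩ | ⟨hi, hj⟩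
    · left
      simp only [Set.mem_insert_iff, Set.mem_singleton_iff] at hi hj ⊢
      have hi4 : i.val < 4 := by
        by_contra h
        exact hne (hz i j (Or.inl (by omega)))
      have hj4 : j.val < 4 := by
        by_contra h
        exact hne (hz i j (Or.inr (by omega)))
      exact ⟨by omega, by omega⟩
    · right
      simp only [Set.mem_insert_iff, Set.mem_singleton_iff] at hi hj ⊢
      have hi4 : i.val < 4 := by
        by_contra h
        exact hne (hz i j (Or.inl (by omega)))
      have hj4 : j.val < 4 := by
        by_contra h
        exact hne (hz i j (Or.inr (by omega)))
      exact ⟨by omega, by omega⟩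
  · rintro ⟨hsu, hsupp, ht1, ht2⟩
    have hzero : ∀ i j : Fin (p+4),
        ¬((i.val = 0 ∨ i.val = 2) ∧ (j.val = 0 ∨ j.val = 2) ∨
          (i.val = 1 ∨ i.val = 3) ∧ (j.val = 1 ∨ j.val = 3)) → A i j = 0 := by
      intro i j h
      by_contra hne
      exact h (by simpa only [Set.mem_insert_iff, Set.mem_singleton_iff] using hsupp i j hne)
    have hA44 : A 4 4 = 0 := hzero 4 4 (by rw [V4 hp]; omega)
    have hA55 : A 5 5 = 0 := hzero 5 5 (by rw [V5 hp]; omega)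
    refine ⟨⟨hsu, fun i j h => hzero i j (by omega)⟩, hsu, ?_,
      by linear_combination ht1 + hA44, by linear_combination ht2 + hA55⟩
    intro i j hne
    rcases hsupp i j hne with ⟨hi, hj⟩ | ⟨hi, hj⟩
    · simp only [Set.mem_insert_iff, Set.mem_singleton_iff] at hi hj ⊢
      exact Or.inl ⟨by omega, by omega⟩
    · simp only [Set.mem_insert_iff, Set.mem_singleton_iff] at hi hj ⊢
      exact Or.inr ⟨by omega, by omega⟩

end Aux2


section Aux3
variable {p : ℕ}

lemma part2 (hp : 2 ≤ p) (A : Matrix (Fin (p+4)) (Fin (p+4)) ℂ) :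
    (sp2Mem p A ∧ g'Mem p A) ↔ diagSU2Mem p A := by
  have d01 : ((0:Fin (p+4)):ℕ) ≠ 1 := by rw [V0]; omega
  constructor
  · rintro ⟨⟨hsu4, hJ⟩, hg⟩
    have hs2 : su2su2Mem p A := (part1 hp A).1 ⟨hsu4, hg⟩
    have col : ∀ j : Fin (p+4), A.mulVec (Pi.single j 1) = fun i => A i j := by
      intro j; funext i; simp [Matrix.mulVec_single]
    have hδ0 : Jmap p (Pi.single (0:Fin (p+4)) (1:ℂ)) = Pi.single (1:Fin (p+4)) (1:ℂ) := by
      funext n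
      have s1 : (Pi.single (0:Fin (p+4)) (1:ℂ) : Fin (p+4) → ℂ) 1 = 0 :=
        by apply Pi.single_eq_of_ne; exact Fin.ne_of_val_ne (by rw [V1, V0]; omega)
      have s2 : (Pi.single (0:Fin (p+4)) (1:ℂ) : Fin (p+4) → ℂ) 2 = 0 :=
        by apply Pi.single_eq_of_ne; exact Fin.ne_of_val_ne (by rw [V2, V0]; omega)
      have s3 : (Pi.single (0:Fin (p+4)) (1:ℂ) : Fin (p+4) → ℂ) 3 = 0 :=
        by apply Pi.single_eq_of_ne; exact Fin.ne_of_val_ne (by rw [V3, V0]; omega)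
      rcases eq_or_ne n 1 with rfl | h1
      · rw [Pi.single_eq_same, J1e, Pi.single_eq_same, map_one]
      · rw [Pi.single_eq_of_ne h1]
        have hv1 : n.val ≠ 1 := fun h => h1 (Fin.ext (by rw [V1]; exact h))
        simp only [Jmap]
        split_ifs <;> simp_all
    have hδ2 : Jmap p (Pi.single (2:Fin (p+4)) (1:ℂ)) = Pi.single (3:Fin (p+4)) (1:ℂ) := by
      funext n
      have s0 : (Pi.single (2:Fin (p+4)) (1:ℂ) : Fin (p+4) → ℂ) 0 = 0 :=
        by apply Pi.single_eq_of_ne; exact Fin.ne_of_val_ne (by rw [V0, V2]; omega)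
      have s1 : (Pi.single (2:Fin (p+4)) (1:ℂ) : Fin (p+4) → ℂ) 1 = 0 :=
        by apply Pi.single_eq_of_ne; exact Fin.ne_of_val_ne (by rw [V1, V2]; omega)
      have s3 : (Pi.single (2:Fin (p+4)) (1:ℂ) : Fin (p+4) → ℂ) 3 = 0 :=
        by apply Pi.single_eq_of_ne; exact Fin.ne_of_val_ne (by rw [V3, V2]; omega)
      rcases eq_or_ne n 3 with rfl | h3
      · rw [Pi.single_eq_same, J3e, Pi.single_eq_same, map_one]
      · rw [Pi.single_eq_of_ne h3]
        have hv3 : n.val ≠ 3 := fun h => h3 (Fin.ext (by rw [V3]; exact h))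
        simp only [Jmap]
        split_ifs <;> simp_all
    have e11 : A 1 1 = (starRingEnd ℂ) (A 0 0) := by
      have h := congrFun (hJ (Pi.single (0:Fin (p+4)) (1:ℂ))) 1
      rw [hδ0, col 0, col 1, J1e] at h
      simpa using h
    have e31 : A 3 1 = (starRingEnd ℂ) (A 2 0) := by
      have h := congrFun (hJ (Pi.single (0:Fin (p+4)) (1:ℂ))) 3
      rw [hδ0, col 0, col 1, J3e] at h
      simpa using h
    have e13 : A 1 3 = (starRingEnd ℂ) (A 0 2) := by
      have h := congrFun (hJ (Pi.single (2:Fin (p+4)) (1:ℂ))) 1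
      rw [hδ2, col 2, col 3, J1e] at h
      simpa using h
    have e33 : A 3 3 = (starRingEnd ℂ) (A 2 2) := by
      have h := congrFun (hJ (Pi.single (2:Fin (p+4)) (1:ℂ))) 3
      rw [hδ2, col 2, col 3, J3e] at h
      simpa using h
    exact ⟨hs2, e11, e13, e31, e33⟩
  · rintro ⟨hs2, e11, e13, e31, e33⟩
    obtain ⟨hsu4, hg⟩ := (part1 hp A).2 hs2
    refine ⟨⟨hsu4, ?_⟩, hg⟩
    obtain ⟨hsu, hsupp, ht1, ht2⟩ := hs2
    have hzero : ∀ i j : Fin (p+4),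
        ¬((i.val = 0 ∨ i.val = 2) ∧ (j.val = 0 ∨ j.val = 2) ∨
          (i.val = 1 ∨ i.val = 3) ∧ (j.val = 1 ∨ j.val = 3)) → A i j = 0 := by
      intro i j h
      by_contra hne
      exact h (by simpa only [Set.mem_insert_iff, Set.mem_singleton_iff] using hsupp i j hne)
    have hrow : ∀ i j : Fin (p+4), 4 ≤ j.val → A i j = 0 :=
      fun i j h => hzero i j (by omega)
    have z01 : A 0 1 = 0 := hzero 0 1 (by rw [V0, V1]; omega)
    have z03 : A 0 3 = 0 := hzero 0 3 (by rw [V0, V3]; omega)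
    have z10 : A 1 0 = 0 := hzero 1 0 (by rw [V1, V0]; omega)
    have z12 : A 1 2 = 0 := hzero 1 2 (by rw [V1, V2]; omega)
    have z21 : A 2 1 = 0 := hzero 2 1 (by rw [V2, V1]; omega)
    have z23 : A 2 3 = 0 := hzero 2 3 (by rw [V2, V3]; omega)
    have z30 : A 3 0 = 0 := hzero 3 0 (by rw [V3, V0]; omega)
    have z32 : A 3 2 = 0 := hzero 3 2 (by rw [V3, V2]; omega)
    intro x
    funext n
    rcases lt_or_ge n.val 4 with hn | hn
    · have h4 : n = 0 ∨ n = 1 ∨ n = 2 ∨ n = 3 := by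
        have hv : n.val = 0 ∨ n.val = 1 ∨ n.val = 2 ∨ n.val = 3 := by omega
        rcases hv with h | h | h | h
        exacts [Or.inl (Fin.ext (by rw [V0]; exact h)),
          Or.inr (Or.inl (Fin.ext (by rw [V1]; exact h))),
          Or.inr (Or.inr (Or.inl (Fin.ext (by rw [V2]; exact h)))),
          Or.inr (Or.inr (Or.inr (Fin.ext (by rw [V3]; exact h))))]
      rcases h4 with rfl | rfl | rfl | rfl
      · rw [row_expand A 0 (hrow 0), J0e, J0e, row_expand A 1 (hrow 1),
          J1e, J2e, J3e, z01, z03, z10, z12, e11, e13]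
        simp only [map_add, map_mul, map_zero, Complex.conj_conj, mul_zero, zero_mul, add_zero, zero_add, neg_zero]
        try ring
      · rw [row_expand A 1 (hrow 1), J1e, J1e, row_expand A 0 (hrow 0),
          J0e, J2e, J3e, z01, z03, z10, z12, e11, e13]
        simp only [map_add, map_mul, map_zero, Complex.conj_conj, mul_zero, zero_mul, add_zero, zero_add, neg_zero]
        try ring
      · rw [row_expand A 2 (hrow 2), J2e, J2e, row_expand A 3 (hrow 3),
          J0e, J1e, J3e, z21, z23, z30, z32, e31, e33]
        simp only [map_add, map_mul, map_zero, Complex.conj_conj, mul_zero, zero_mul, add_zero, zero_add, neg_zero]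
        try ring
      · rw [row_expand A 3 (hrow 3), J3e, J3e, row_expand A 2 (hrow 2),
          J0e, J1e, J2e, z21, z23, z30, z32, e31, e33]
        simp only [map_add, map_mul, map_zero, Complex.conj_conj, mul_zero, zero_mul, add_zero, zero_add, neg_zero]
        try ring
    · rw [Jhe _ n hn, row_expand A n (hrow n),
        hzero n 0 (by rw [V0]; omega), hzero n 1 (by rw [V1]; omega),
        hzero n 2 (by rw [V2]; omega), hzero n 3 (by rw [V3]; omega)]
      ring

end Aux3

/-- In `su(p+4)` with `p ≥ 2`, with the basis and the subalgebras
`su(4)`, `sp(2)`, `g' = su(3) ⊕ su(3)` defined above, one has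
`su(4) ∩ g' = su(2) ⊕ su(2)` and `sp(2) ∩ g' = Δsu(2)`. -/
theorem stmt19 (hp : 2 ≤ p) :
    (∀ A : Matrix (Fin (p + 4)) (Fin (p + 4)) ℂ,
      (su4Mem p A ∧ g'Mem p A) ↔ su2su2Mem p A) ∧
    (∀ A : Matrix (Fin (p + 4)) (Fin (p + 4)) ℂ,
      (sp2Mem p A ∧ g'Mem p A) ↔ diagSU2Mem p A) := by
  exact ⟨fun A => part1 hp A, fun A => part2 hp A⟩

end
end
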